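/- arXiv:2307.07223 — 12 statements merged into one kernel-verified Lean document; each statement's English description precedes it below -/
import Mathlib

section
/- There exists a countably infinite subset N of ℝ^{ω₁} such that N is closed in ℝ^{ω₁}, N is discrete in the subspace topology, and N is not C*-embedded in ℝ^{ω₁}; that is, there is a bounded continuous function N → ℝ that has no continuous extension to all of ℝ^{ω₁}. -/
open Set Ordinal

/-- An index type of cardinality `ℵ₁`: the countable ordinals. -/
abbrev Omega1Index : Type 1 := {o : Ordinal // o < Ordinal.omega 1}

/-!
At every countable ordinal `β`, label the natural numbers by a partial map `L β : ℕ → Option ℚ`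
so that for `γ < β` every infinite fibre of `L β` is almost contained in a fibre of `L γ` with a
strictly smaller label, and every infinite fibre of `L γ` almost contains infinite fibres of
`L β` with labels arbitrarily close above its own. Such a family is built by transfinite
recursion: at a countable stage there are only countably many requirements, each met by a
pseudo-intersection along a cofinal sequence of earlier stages.

The point `x n ∈ ℝ^{ω₁}` has `β`-coordinate `code (label of n / 2) + 1 / (n + 2)`. A cluster
point of `(x n)` would single out, at every `β`, a label whose fibres pairwise meet in infinite
sets; the labels would then strictly increase along `ω₁`, which is impossible in `ℚ`. Hence
`{x n}` is closed and discrete. A continuous extension `g` of `x n ↦ (-1) ^ n` is controlled near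
each `x n` by finitely many coordinates, all below some countable `β`. Truncated to the
coordinates below `β`, both `x (2 m)` and `x (2 m + 1)`, for `m` running through an infinite fibre
of `L β`, converge to one point, at which `g` would have to be both `≥ 1/2` and `≤ -1/2`.
-/

open Filter Topology Function

namespace NotCstarEmbedded

theorem isClosed_and_isDiscrete_range {X : Type*} [TopologicalSpace X] [T1Space X] {x : ℕ → X}
    (hx : ∀ y, ¬ MapClusterPt y atTop x) : IsClosed (range x) ∧ IsDiscrete (range x) := by
  refine isClosed_and_discrete_iff.2 fun y => ?_
  obtain ⟨U, hU, hxU⟩ : ∃ U ∈ 𝓝 y, ∀ᶠ n in atTop, x n ∉ U := by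
    simpa [mapClusterPt_iff_frequently, not_frequently] using hx y
  obtain ⟨N, hN⟩ := eventually_atTop.1 hxU
  have hF : (x '' Iio N \ {y})ᶜ ∈ 𝓝 y :=
    ((finite_Iio N).image x).sdiff.isClosed.compl_mem_nhds fun h => h.2 rfl
  rw [disjoint_principal_right, mem_nhdsWithin_iff_exists_mem_nhds_inter]
  refine ⟨_, inter_mem hU hF, ?_⟩
  rintro _ ⟨⟨hU', hF'⟩, hy'⟩ ⟨n, rfl⟩
  exact hF' ⟨⟨n, not_le.1 fun h => hN n h hU', rfl⟩, hy'⟩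

theorem exists_finset_forall_mem_of_mem_nhds {ι : Type*} {X : ι → Type*} [∀ i, TopologicalSpace (X i)]
    {x : ∀ i, X i} {U : Set (∀ i, X i)} (hU : U ∈ 𝓝 x) :
    ∃ I : Finset ι, ∀ z, (∀ i ∈ I, z i = x i) → z ∈ U := by
  rw [nhds_pi, Filter.mem_pi'] at hU
  obtain ⟨I, t, ht, htU⟩ := hU
  exact ⟨I, fun z hz => htU fun i hi => hz i hi ▸ mem_of_mem_nhds (ht i)⟩

section Points

open Encodable

variable {ι α : Type*} [Encodable α] (L : ι → ℕ → α)

/-- The integer part of `point L n β` codes the label of `n / 2` at `β` and the fractional part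
`1 / (n + 2)` recovers `n`; the points `point L (2 * m)` and `point L (2 * m + 1)` carry the same
labels everywhere. -/
noncomputable def point (n : ℕ) (β : ι) : ℝ := encode (L β (n / 2)) + ((n : ℝ) + 2)⁻¹

variable {L}

theorem label_eq_of_abs_point_sub_lt {n : ℕ} {β : ι} {a : α}
    (h : |point L n β - encode a| < 1 / 2) : L β (n / 2) = a := by
  have h₀ : (0 : ℝ) < ((n : ℝ) + 2)⁻¹ := by positivity
  have h₁ : ((n : ℝ) + 2)⁻¹ ≤ 1 / 2 := by
    rw [one_div]; exact inv_anti₀ two_pos (by linarith [n.cast_nonneg (α := ℝ)])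
  rw [point, abs_lt] at h
  set k := encode (L β (n / 2))
  have hk : (k : ℝ) < encode a + 1 ∧ (encode a : ℝ) < k + 1 := ⟨by linarith, by linarith⟩
  norm_cast at hk
  exact encode_injective (by omega)

theorem point_injective [Nonempty ι] : Injective (point L) := by
  intro n n' h
  obtain ⟨β⟩ := ‹Nonempty ι›
  have hfract : ∀ n : ℕ, Int.fract (point L n β) = ((n : ℝ) + 2)⁻¹ := fun n => by
    rw [point, Int.fract_natCast_add, Int.fract_eq_self]
    exact ⟨by positivity, inv_lt_one_of_one_lt₀ (by linarith [n.cast_nonneg (α := ℝ)])⟩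
  simpa [hfract] using congrArg Int.fract (congrFun h β)

theorem exists_abs_sub_encode_lt {y : ι → ℝ} (hy : MapClusterPt y atTop (point L)) (β : ι) :
    ∃ a : α, |y β - encode a| < 1 / 4 := by
  have hU : (fun z : ι → ℝ => z β) ⁻¹' Metric.ball (y β) (1 / 8) ∈ 𝓝 y :=
    (continuous_apply β).continuousAt.preimage_mem_nhds (Metric.ball_mem_nhds _ (by norm_num))
  obtain ⟨n, hn, hn₆⟩ :=
    ((mapClusterPt_iff_frequently.1 hy _ hU).and_eventually (eventually_ge_atTop 6)).exists
  rw [mem_preimage, Metric.mem_ball, Real.dist_eq, point, abs_lt] at hn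
  have h₀ : (0 : ℝ) < ((n : ℝ) + 2)⁻¹ := by positivity
  have h₆ : (6 : ℝ) ≤ n := by exact_mod_cast hn₆
  have h₁ : ((n : ℝ) + 2)⁻¹ ≤ 1 / 8 := by
    rw [one_div]; exact inv_anti₀ (by norm_num) (by linarith)
  exact ⟨L β (n / 2), abs_lt.2 ⟨by linarith, by linarith⟩⟩

theorem frequently_label_eq_and_label_eq {y : ι → ℝ} (hy : MapClusterPt y atTop (point L))
    {β β' : ι} {a a' : α} (ha : |y β - encode a| < 1 / 4) (ha' : |y β' - encode a'| < 1 / 4) :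
    ∃ᶠ m in atTop, L β m = a ∧ L β' m = a' := by
  have hU : ∀ β, (fun z : ι → ℝ => z β) ⁻¹' Metric.ball (y β) (1 / 4) ∈ 𝓝 y := fun β =>
    (continuous_apply β).continuousAt.preimage_mem_nhds (Metric.ball_mem_nhds _ (by norm_num))
  refine (Nat.tendsto_div_const_atTop two_ne_zero).frequently
    ((mapClusterPt_iff_frequently.1 hy _ (inter_mem (hU β) (hU β'))).mono fun n hn => ?_)
  simp only [mem_inter_iff, mem_preimage, Metric.mem_ball, Real.dist_eq] at hn
  exact ⟨label_eq_of_abs_point_sub_lt ((abs_sub_le _ (y β) _).trans_lt (by linarith)),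
    label_eq_of_abs_point_sub_lt ((abs_sub_le _ (y β') _).trans_lt (by linarith))⟩

theorem not_mapClusterPt_point
    (hL : ∀ K : ι → α, (∀ β, (L β ⁻¹' {K β}).Infinite) →
      ∃ β β', (L β ⁻¹' {K β} ∩ L β' ⁻¹' {K β'}).Finite)
    (y : ι → ℝ) : ¬ MapClusterPt y atTop (point L) := by
  intro hy
  choose K hK using exists_abs_sub_encode_lt hy
  obtain ⟨β, β', hfin⟩ := hL K fun β => Nat.frequently_atTop_iff_infinite.1
    ((frequently_label_eq_and_label_eq hy (hK β) (hK β)).mono fun _ h => h.1)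
  exact Nat.frequently_atTop_iff_infinite.1
    (frequently_label_eq_and_label_eq hy (hK β) (hK β')) hfin

theorem exists_tendsto_indicator_point {S : Set ι} {u : ℕ → ℕ} (hu : StrictMono u)
    (hS : ∀ ζ ∈ S, ∃ a, ∀ᶠ i in atTop, L ζ (u i) = a) :
    ∃ Q : ι → ℝ, ∀ p < 2, Tendsto (fun i => S.indicator (point L (2 * u i + p))) atTop (𝓝 Q) := by
  classical
  choose a ha using hS
  refine ⟨fun ζ => if hζ : ζ ∈ S then encode (a ζ hζ) else 0, fun p hp => ?_⟩
  refine tendsto_pi_nhds.2 fun ζ => ?_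
  by_cases hζ : ζ ∈ S
  · simp only [dif_pos hζ, indicator_of_mem hζ, point]
    have hlabel : ∀ᶠ i in atTop, L ζ ((2 * u i + p) / 2) = a ζ hζ :=
      (ha ζ hζ).mono fun i hi => by rwa [show (2 * u i + p) / 2 = u i by omega]
    have htick : Tendsto (fun i => ((↑(2 * u i + p) : ℝ) + 2)⁻¹) atTop (𝓝 0) :=
      tendsto_inv_atTop_zero.comp <| tendsto_atTop_add_const_right _ 2 <|
        tendsto_natCast_atTop_atTop.comp (StrictMono.tendsto_atTop fun i j h => by
          have := hu h; omega)
    simpa using (tendsto_const_nhds.add htick).congr' (hlabel.mono fun i hi => by simp [hi])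
  · simpa only [dif_neg hζ, indicator_of_notMem hζ] using tendsto_const_nhds

theorem not_exists_continuous_extension
    (hL : ∀ S : Set ι, S.Countable → ∃ M : Set ℕ, M.Infinite ∧
      ∀ ζ ∈ S, ∃ a, ∀ᶠ m in cofinite, m ∈ M → L ζ m = a) :
    ¬ ∃ g : C(ι → ℝ, ℝ), ∀ n, g (point L n) = (-1) ^ n := by
  rintro ⟨g, hg⟩
  have hlocal : ∀ n, ∃ I : Finset ι,
      ∀ z, (∀ i ∈ I, z i = point L n i) → |g z - (-1) ^ n| < 1 / 2 := fun n => by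
    obtain ⟨I, hI⟩ := exists_finset_forall_mem_of_mem_nhds (g.continuous.continuousAt.preimage_mem_nhds
      (Metric.ball_mem_nhds (g (point L n)) one_half_pos))
    exact ⟨I, fun z hz => by simpa [Real.dist_eq, hg] using hI z hz⟩
  choose I hI using hlocal
  set S := ⋃ n, (I n : Set ι)
  have hnear : ∀ n, |g (S.indicator (point L n)) - (-1) ^ n| < 1 / 2 := fun n =>
    hI n _ fun ζ hζ => indicator_of_mem (mem_iUnion_of_mem n hζ) _
  obtain ⟨M, hM, hMS⟩ := hL S (countable_iUnion fun n => (I n).countable_toSet)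
  obtain ⟨u, hu, huM⟩ := extraction_of_frequently_atTop (Nat.frequently_atTop_iff_infinite.2 hM)
  obtain ⟨Q, hQ⟩ := exists_tendsto_indicator_point hu fun ζ hζ => (hMS ζ hζ).imp fun _ ha =>
    (hu.tendsto_atTop.eventually (Nat.cofinite_eq_atTop ▸ ha)).mono fun i hi => hi (huM i)
  have hgQ : ∀ p < 2, |g Q - (-1) ^ p| ≤ 1 / 2 := fun p hp => by
    refine le_of_tendsto (((g.continuous.tendsto Q).comp (hQ p hp)).sub_const _).abs
      (Eventually.of_forall fun i => ?_)
    simpa [pow_add, pow_mul] using (hnear (2 * u i + p)).le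
  have h₀ := abs_le.1 (hgQ 0 two_pos)
  have h₁ := abs_le.1 (hgQ 1 one_lt_two)
  norm_num at h₀ h₁
  linarith

end Points

theorem exists_isClosed_discrete_not_extendable {ι α : Type*} [Nonempty ι] [Encodable α]
    (L : ι → ℕ → α)
    (hA : ∀ K : ι → α, (∀ β, (L β ⁻¹' {K β}).Infinite) →
      ∃ β β', (L β ⁻¹' {K β} ∩ L β' ⁻¹' {K β'}).Finite)
    (hB : ∀ S : Set ι, S.Countable → ∃ M : Set ℕ, M.Infinite ∧
      ∀ ζ ∈ S, ∃ a, ∀ᶠ m in cofinite, m ∈ M → L ζ m = a) :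
    ∃ N : Set (ι → ℝ), N.Countable ∧ N.Infinite ∧ IsClosed N ∧ DiscreteTopology N ∧
      ∃ f : C(N, ℝ), (∃ M : ℝ, ∀ x : N, |f x| ≤ M) ∧
        ¬ ∃ g : C((ι → ℝ), ℝ), ∀ x : N, g x.val = f x := by
  obtain ⟨hcl, hdisc⟩ := isClosed_and_isDiscrete_range (not_mapClusterPt_point hA)
  have := hdisc.to_subtype
  let e := Equiv.ofInjective (point L) point_injective
  refine ⟨range (point L), countable_range _, infinite_range_of_injective point_injective, hcl,
    inferInstance, ⟨fun x => (-1) ^ (e.symm x : ℕ), continuous_of_discreteTopology⟩,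
    ⟨1, fun x => by simp⟩, ?_⟩
  rintro ⟨g, hg⟩
  exact not_exists_continuous_extension hB ⟨g, fun n => by simpa [e] using hg (e n)⟩

theorem exists_family_of_extend {ι X : Type*} [LT ι] [WellFoundedLT ι] [Nonempty X]
    (P : X → Prop) (R : X → X → Prop)
    (extend : ∀ (β : ι) (L : ι → X), (∀ γ < β, P (L γ)) →
      (∀ γ₁ γ₂, γ₁ < γ₂ → γ₂ < β → R (L γ₁) (L γ₂)) → ∃ x, P x ∧ ∀ γ < β, R (L γ) x) :
    ∃ L : ι → X, ∀ β, P (L β) ∧ ∀ γ < β, R (L γ) (L β) := by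
  let L : ι → X := WellFoundedLT.fix fun β IH =>
    Classical.epsilon fun x => P x ∧ ∀ γ (h : γ < β), R (IH γ h) x
  refine ⟨L, fun β => ?_⟩
  induction β using WellFoundedLT.induction with | _ β ih
  rw [show L β = _ from WellFoundedLT.fix_eq _ β]
  exact Classical.epsilon_spec (extend β L (fun γ h => (ih γ h).1)
    fun γ₁ γ₂ h₁₂ h₂ => (ih γ₂ h₂).2 γ₁ h₁₂)

namespace Omega1Index

theorem countable_Iio (β : Omega1Index) : (Iio β).Countable := by
  have : (Iio β.val).Countable := by
    rw [← Cardinal.le_aleph0_iff_set_countable, Cardinal.mk_Iio_ordinal,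
      ← Cardinal.lift_aleph0.{1, 0}, Cardinal.lift_le, ← Cardinal.lt_aleph_one_iff,
      ← Cardinal.lt_ord, Cardinal.ord_aleph]
    exact β.2
  exact this.preimage Subtype.val_injective

theorem exists_gt_of_countable {s : Set Omega1Index} (hs : s.Countable) :
    ∃ β : Omega1Index, ∀ γ ∈ s, γ < β := by
  have := hs.to_subtype
  have hsup : ⨆ γ : s, γ.1.1 < Ordinal.omega 1 := Ordinal.iSup_lt_omega_one fun γ => γ.1.2
  refine ⟨⟨Order.succ (⨆ γ : s, γ.1.1), (Cardinal.isSuccLimit_omega 1).succ_lt hsup⟩,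
    fun γ hγ => ?_⟩
  exact (Ordinal.le_iSup (fun γ : s => γ.1.1) ⟨γ, hγ⟩).trans_lt (Order.lt_succ _)

instance : Uncountable Omega1Index := ⟨fun _ => by
  obtain ⟨β, hβ⟩ := exists_gt_of_countable (countable_univ (α := Omega1Index))
  exact lt_irrefl β (hβ β trivial)⟩

end Omega1Index

theorem infinite_of_eventuallyLE {α : Type*} {s t : Set α} (hs : s.Infinite)
    (h : s ≤ᶠ[cofinite] t) : t.Infinite :=
  frequently_cofinite_iff_infinite.1 ((frequently_cofinite_iff_infinite.2 hs).mp h)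

theorem exists_infinite_eventuallyLE_forall {F : ℕ → Set ℕ} (hinf : ∀ i, (F i).Infinite)
    (hF : ∀ i, F (i + 1) ≤ᶠ[cofinite] F i) :
    ∃ B : Set ℕ, B.Infinite ∧ ∀ i, B ≤ᶠ[cofinite] F i := by
  have hle : ∀ i, F i ≤ᶠ[cofinite] dissipate F i := by
    intro i
    induction i with
    | zero => rw [dissipate_zero_nat]; exact EventuallyLE.rfl
    | succ i ih =>
      rw [dissipate_succ]
      filter_upwards [(hF i).trans ih] with x hx h using ⟨hx h, h⟩
  obtain ⟨φ, hφ, hφF⟩ := extraction_forall_of_frequently fun i =>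
    Nat.frequently_atTop_iff_infinite.2 (infinite_of_eventuallyLE (hinf i) (hle i))
  refine ⟨range φ, infinite_range_of_injective hφ.injective, fun i => ?_⟩
  refine eventually_cofinite.2 (((finite_Iio i).image φ).subset ?_)
  intro x hx
  obtain ⟨j, rfl⟩ : x ∈ range φ := of_not_imp hx
  refine ⟨j, mem_Iio.2 (not_le.1 fun hij => hx fun _ => ?_), rfl⟩
  exact dissipate_subset le_rfl (antitone_dissipate hij (hφF j))

theorem exists_monotone_cofinal {ι : Type*} [LinearOrder ι] {β γ : ι}
    (hβ : (Iio β).Countable) (hγ : γ < β) :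
    ∃ b : ℕ → ι, b 0 = γ ∧ Monotone b ∧ (∀ i, b i < β) ∧ ∀ γ' < β, ∃ i, γ' ≤ b i := by
  obtain ⟨e, he⟩ := hβ.exists_eq_range ⟨γ, hγ⟩
  let b : ℕ → ι := fun i => Nat.rec γ (fun i x => max x (e i)) i
  have hlt : ∀ i, b i < β := by
    intro i
    induction i with
    | zero => exact hγ
    | succ i ih => exact max_lt ih (he ▸ mem_range_self i : e i ∈ Iio β)
  refine ⟨b, rfl, monotone_nat_of_le_succ fun i => le_max_left _ _, hlt, fun γ' hγ' => ?_⟩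
  obtain ⟨i, rfl⟩ : γ' ∈ range e := he ▸ hγ'
  exact ⟨i + 1, le_max_right _ _⟩

theorem exists_injective_mem_Ioo {s r : ℕ → ℚ} (hsr : ∀ m, s m < r m) :
    ∃ f : ℕ → ℚ, Injective f ∧ ∀ m, f m ∈ Ioo (s m) (r m) := by
  obtain ⟨φ, hφ, hφI⟩ := extraction_forall_of_frequently fun m =>
    Nat.frequently_atTop_iff_infinite.2 <|
      (Ioo_infinite (hsr m)).preimage (by simp : _ ⊆ range (Denumerable.eqv ℚ).symm)
  exact ⟨fun m => (Denumerable.eqv ℚ).symm (φ m), (Denumerable.eqv ℚ).symm.injective.comp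
    hφ.injective, hφI⟩

theorem exists_infinite_fibers {B : ℕ → Set ℕ} (hB : ∀ m, (B m).Infinite) :
    ∃ c : ℕ → Option ℕ, ∀ m, (c ⁻¹' {some m}).Infinite ∧ c ⁻¹' {some m} ⊆ B m := by
  obtain ⟨a, ha, haB⟩ := extraction_forall_of_frequently fun t =>
    Nat.frequently_atTop_iff_infinite.2 (hB (Nat.unpair t).1)
  let c : ℕ → Option ℕ := fun x => (partialInv a x).map fun t => (Nat.unpair t).1
  refine ⟨c, fun m => ?_⟩
  have hfib : c ⁻¹' {some m} = a '' {t | (Nat.unpair t).1 = m} := by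
    ext x
    simp [c, Option.map_eq_some_iff, ha.injective.isPartialInv _ x, and_comm]
  have hinf : {t | (Nat.unpair t).1 = m}.Infinite :=
    infinite_of_injective_forall_mem (f := Nat.pair m) (fun i j h => (Nat.pair_eq_pair.1 h).2)
      fun j => by simp
  rw [hfib]
  refine ⟨hinf.image ha.injective.injOn, ?_⟩
  rintro _ ⟨t, rfl, rfl⟩
  exact haB t

def fiber (d : ℕ → Option ℚ) (q : ℚ) : Set ℕ := d ⁻¹' {some q}

structure Refines (lo hi : ℕ → Option ℚ) : Prop where
  exists_lt : ∀ q', (fiber hi q').Infinite → ∃ q < q', fiber hi q' ≤ᶠ[cofinite] fiber lo q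
  exists_mem_Ioo : ∀ q r, (fiber lo q).Infinite → q < r →
    ∃ q' ∈ Ioo q r, (fiber hi q').Infinite ∧ fiber hi q' ≤ᶠ[cofinite] fiber lo q

section Refines

variable {lo hi : ℕ → Option ℚ}

theorem exists_le_of_eq_or_refines (h : lo = hi ∨ Refines lo hi) {q' : ℚ}
    (hq' : (fiber hi q').Infinite) : ∃ q ≤ q', fiber hi q' ≤ᶠ[cofinite] fiber lo q := by
  rcases h with rfl | h
  · exact ⟨q', le_rfl, EventuallyLE.rfl⟩
  · obtain ⟨q, hq, hle⟩ := h.exists_lt q' hq'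
    exact ⟨q, hq.le, hle⟩

theorem exists_lt_of_eq_or_refines (h : lo = hi ∨ Refines lo hi) {q r : ℚ}
    (hq : (fiber lo q).Infinite) (hqr : q < r) :
    ∃ q' < r, (fiber hi q').Infinite ∧ fiber hi q' ≤ᶠ[cofinite] fiber lo q := by
  rcases h with rfl | h
  · exact ⟨q, hqr, hq, EventuallyLE.rfl⟩
  · obtain ⟨q', hq', hinf, hle⟩ := h.exists_mem_Ioo q r hq hqr
    exact ⟨q', hq'.2, hinf, hle⟩

end Refines

section Extension

variable {ι : Type*} [LinearOrder ι] {β : ι} {L : ι → ℕ → Option ℚ}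

theorem exists_infinite_eventuallyLE_fiber_forall_lt (hβ : (Iio β).Countable)
    (hL : ∀ γ₁ γ₂, γ₁ < γ₂ → γ₂ < β → Refines (L γ₁) (L γ₂)) {γ : ι} (hγ : γ < β) {q r : ℚ}
    (hq : (fiber (L γ) q).Infinite) (hqr : q < r) :
    ∃ B : Set ℕ, B.Infinite ∧ B ≤ᶠ[cofinite] fiber (L γ) q ∧
      ∃ s ∈ Ioo q r, ∀ γ' < β, ∃ q' < s, B ≤ᶠ[cofinite] fiber (L γ') q' := by
  have hL' : ∀ {γ₁ γ₂}, γ₁ ≤ γ₂ → γ₂ < β → L γ₁ = L γ₂ ∨ Refines (L γ₁) (L γ₂) :=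
    fun h₁₂ h₂ => h₁₂.eq_or_lt.imp (congrArg L) (hL _ _ · h₂)
  obtain ⟨b, hb0, hb, hbβ, hbcof⟩ := exists_monotone_cofinal hβ hγ
  obtain ⟨s, hqs, hsr⟩ := exists_between hqr
  have hnext : ∀ i c, (fiber (L (b i)) c).Infinite → c < s → ∃ c' < s,
      (fiber (L (b (i + 1))) c').Infinite ∧
        fiber (L (b (i + 1))) c' ≤ᶠ[cofinite] fiber (L (b i)) c := fun i c hc hcs =>
    exists_lt_of_eq_or_refines (hL' (hb i.le_succ) (hbβ _)) hc hcs
  choose! next hnext_lt hnext_inf hnext_le using hnext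
  let c : ℕ → ℚ := fun i => Nat.rec q next i
  have hc : ∀ i, c i < s ∧ (fiber (L (b i)) (c i)).Infinite := by
    intro i
    induction i with
    | zero => exact ⟨hqs, hb0 ▸ hq⟩
    | succ i ih => exact ⟨hnext_lt i _ ih.2 ih.1, hnext_inf i _ ih.2 ih.1⟩
  obtain ⟨B, hB, hBF⟩ := exists_infinite_eventuallyLE_forall (fun i => (hc i).2)
    fun i => hnext_le i _ (hc i).2 (hc i).1
  refine ⟨B, hB, hb0 ▸ hBF 0, s, ⟨hqs, hsr⟩, fun γ' hγ' => ?_⟩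
  obtain ⟨i, hi⟩ := hbcof γ' hγ'
  obtain ⟨q', hq', hle⟩ := exists_le_of_eq_or_refines (hL' hi (hbβ i)) (hc i).2
  exact ⟨q', hq'.trans_lt (hc i).1, (hBF i).trans hle⟩

theorem exists_refines_forall_lt (hβ : (Iio β).Countable)
    (hne : ∀ γ < β, ∃ q, (fiber (L γ) q).Infinite)
    (hL : ∀ γ₁ γ₂, γ₁ < γ₂ → γ₂ < β → Refines (L γ₁) (L γ₂)) :
    ∃ d : ℕ → Option ℚ, (∃ q, (fiber d q).Infinite) ∧ ∀ γ < β, Refines (L γ) d := by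
  -- A task `(γ, q, r)`: give `d` an infinite fibre below the infinite fibre `q` of `L γ`, with
  -- label in `(q, r)`.
  let T : Set (ι × ℚ × ℚ) := {t | t.1 < β ∧ (fiber (L t.1) t.2.1).Infinite ∧ t.2.1 < t.2.2}
  rcases T.eq_empty_or_nonempty with hT | hT
  · refine ⟨fun _ => some 0, ⟨0, by simpa [fiber] using infinite_univ⟩, fun γ hγ => ?_⟩
    obtain ⟨q, hq⟩ := hne γ hγ
    exact absurd hT (Nonempty.ne_empty ⟨(γ, q, q + 1), hγ, hq, lt_add_one q⟩)
  have hTc : T.Countable :=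
    (hβ.prod (countable_univ (α := ℚ × ℚ))).mono fun t ht => mk_mem_prod ht.1 (mem_univ t.2)
  obtain ⟨e, he⟩ := hTc.exists_eq_range hT
  have heT : ∀ m, e m ∈ T := fun m => he ▸ mem_range_self m
  choose B hB hBF s hs hBs using fun m =>
    exists_infinite_eventuallyLE_fiber_forall_lt hβ hL (heT m).1 (heT m).2.1 (heT m).2.2
  obtain ⟨f, hf, hfI⟩ := exists_injective_mem_Ioo fun m => (hs m).2
  obtain ⟨c, hc⟩ := exists_infinite_fibers hB
  let d : ℕ → Option ℚ := fun x => (c x).map f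
  have hfib : ∀ m, fiber d (f m) = c ⁻¹' {some m} := fun m => by
    ext x
    simp [d, fiber, Option.map_eq_some_iff, hf.eq_iff]
  have hrange : ∀ q, (fiber d q).Nonempty → q ∈ range f := by
    rintro q ⟨x, hx⟩
    obtain ⟨m, -, rfl⟩ := Option.map_eq_some_iff.1 hx
    exact mem_range_self m
  refine ⟨d, ⟨f 0, hfib 0 ▸ (hc 0).1⟩, fun γ hγ => ⟨fun q' hq' => ?_, fun q r hq hqr => ?_⟩⟩
  · obtain ⟨m, rfl⟩ := hrange q' hq'.nonempty
    obtain ⟨q, hq, hle⟩ := hBs m γ hγ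
    exact ⟨q, hq.trans (hfI m).1, hfib m ▸ (LE.le.eventuallyLE (hc m).2).trans hle⟩
  · obtain ⟨m, hm⟩ : (γ, q, r) ∈ range e := he ▸ ⟨hγ, hq, hqr⟩
    have hBFm := hBF m
    have hsm := hs m
    have hfIm := hfI m
    simp only [hm] at hBFm hsm hfIm
    exact ⟨f m, ⟨hsm.1.trans hfIm.1, hfIm.2⟩, hfib m ▸ (hc m).1,
      hfib m ▸ (LE.le.eventuallyLE (hc m).2).trans hBFm⟩

end Extension

theorem exists_finite_inter_fiber {ι : Type*} [LinearOrder ι] [Uncountable ι]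
    {L : ι → ℕ → Option ℚ} (hL : ∀ γ β, γ < β → Refines (L γ) (L β)) {K : ι → ℚ}
    (hK : ∀ β, (fiber (L β) (K β)).Infinite) :
    ∃ γ β, (fiber (L γ) (K γ) ∩ fiber (L β) (K β)).Finite := by
  by_contra! h
  have hK_mono : StrictMono K := by
    intro γ β hγβ
    obtain ⟨q, hq, hle⟩ := (hL γ β hγβ).exists_lt (K β) (hK β)
    obtain ⟨m, hmK, hmq⟩ := (infinite_of_eventuallyLE (h γ β) (EventuallyLE.rfl.inter hle)).nonempty
    exact Option.some_injective _ (hmK.symm.trans hmq) ▸ hq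
  exact not_countable hK_mono.injective.countable

theorem exists_levels : ∃ L : Omega1Index → ℕ → Option ℚ,
    ∀ β, (∃ q, (fiber (L β) q).Infinite) ∧ ∀ γ < β, Refines (L γ) (L β) :=
  exists_family_of_extend _ _ fun β _ hne hL =>
    exists_refines_forall_lt (Omega1Index.countable_Iio β) hne hL

/-- Unlabelled numbers get pairwise distinct labels, so that only the fibres of genuine labels can
be infinite. -/
def totalLabel (d : ℕ → Option ℚ) (m : ℕ) : ℚ ⊕ ℕ := (d m).elim (.inr m) .inl

theorem totalLabel_preimage_inl (d : ℕ → Option ℚ) (q : ℚ) :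
    totalLabel d ⁻¹' {.inl q} = fiber d q := by
  ext m
  cases h : d m <;> simp [totalLabel, fiber, h]

theorem totalLabel_preimage_inr_subset (d : ℕ → Option ℚ) (k : ℕ) :
    totalLabel d ⁻¹' {.inr k} ⊆ {k} := by
  intro m hm
  cases h : d m <;> simp_all [totalLabel]

section Levels

variable {L : Omega1Index → ℕ → Option ℚ}
  (hL : ∀ β, (∃ q, (fiber (L β) q).Infinite) ∧ ∀ γ < β, Refines (L γ) (L β))
include hL

theorem exists_finite_inter_preimage_totalLabel (K : Omega1Index → ℚ ⊕ ℕ)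
    (hK : ∀ β, (totalLabel (L β) ⁻¹' {K β}).Infinite) :
    ∃ β β', (totalLabel (L β) ⁻¹' {K β} ∩ totalLabel (L β') ⁻¹' {K β'}).Finite := by
  have hinl : ∀ β, ∃ q, K β = .inl q := by
    intro β
    rcases h : K β with q | k
    · exact ⟨q, rfl⟩
    · exact absurd ((finite_singleton k).subset (totalLabel_preimage_inr_subset _ k)) (h ▸ hK β)
  choose q hq using hinl
  simp only [hq, totalLabel_preimage_inl] at hK ⊢
  exact exists_finite_inter_fiber (fun γ β h => (hL β).2 γ h) hK

theorem exists_infinite_eventually_totalLabel_eq {S : Set Omega1Index} (hS : S.Countable) :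
    ∃ M : Set ℕ, M.Infinite ∧ ∀ ζ ∈ S, ∃ a, ∀ᶠ m in cofinite, m ∈ M → totalLabel (L ζ) m = a := by
  obtain ⟨β, hβ⟩ := Omega1Index.exists_gt_of_countable hS
  obtain ⟨q₀, hq₀⟩ := (hL β).1
  refine ⟨fiber (L β) q₀, hq₀, fun ζ hζ => ?_⟩
  obtain ⟨q, -, hle⟩ := ((hL β).2 ζ (hβ ζ hζ)).exists_lt q₀ hq₀
  exact ⟨.inl q, hle.mono fun m hm hmM => by
    simp [totalLabel, show L ζ m = some q from hm hmM]⟩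

end Levels

end NotCstarEmbedded

open NotCstarEmbedded

/-- There is a countably infinite subset of `ℝ^{ω₁}` that is closed, discrete in the
subspace topology, and not `C*`-embedded: some bounded continuous real-valued function on it
has no continuous extension to all of `ℝ^{ω₁}`. -/
theorem closed_copy_of_N_in_R_omega1_not_Cstar_embedded :
    ∃ N : Set (Omega1Index → ℝ),
      N.Countable ∧ N.Infinite ∧ IsClosed N ∧ DiscreteTopology N ∧
      ∃ f : C(N, ℝ), (∃ M : ℝ, ∀ x : N, |f x| ≤ M) ∧
        ¬ ∃ g : C((Omega1Index → ℝ), ℝ), ∀ x : N, g x.val = f x := by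
  obtain ⟨L, hL⟩ := exists_levels
  exact exists_isClosed_discrete_not_extendable (fun β => totalLabel (L β))
    (exists_finite_inter_preimage_totalLabel hL)
    fun _ hS => exists_infinite_eventually_totalLabel_eq hL hS
end

section
/- If there exists a nonempty compact Hausdorff space X with a family of ℵ₁ many closed Gδ subsets of X whose union is X such that no countable subfamily has union X, then there exists a compact Hausdorff space Y of topological weight at most ℵ₁ (i.e. Y has a basis of cardinality at most ℵ₁) with a family of ℵ₁ many closed Gδ subsets of Y whose union is Y such that no countable subfamily has union Y. -/
open Set Ordinal

/-- Preimage of a Gδ set under a continuous map is Gδ. -/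
lemma my_isGδ_preimage {A B : Type*} [TopologicalSpace A] [TopologicalSpace B]
    {f : A → B} (hf : Continuous f) {s : Set B} (hs : IsGδ s) : IsGδ (f ⁻¹' s) := by
  obtain ⟨T, hT, hTc, rfl⟩ := hs
  rw [Set.preimage_sInter]
  exact IsGδ.biInter hTc fun t ht => ((hT t ht).preimage hf).isGδ

/-- The standard basis of a product of spaces, out of bases of the factors, has
cardinality at most `#(Finset ι) * ℵ₀` when the factor bases are countable. -/
lemma my_mk_pi_basis_le {κ : Type} [Infinite κ] {bR : Set (Set ℝ)} (hbRc : bR.Countable) :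
    Cardinal.mk ↥{ S : Set (κ → ℝ) | ∃ (U : κ → Set ℝ) (F : Finset κ),
      (∀ i, i ∈ F → U i ∈ bR) ∧ S = (F : Set κ).pi U } ≤ Cardinal.mk κ := by
  classical
  obtain ⟨en, hen⟩ : ∃ en : ℕ → Set ℝ, insert Set.univ bR ⊆ Set.range en :=
    ((hbRc.insert Set.univ).exists_eq_range (Set.insert_nonempty _ _)).imp
      (fun en hen => hen.le)
  have hen' : bR ⊆ Set.range en := (Set.subset_insert _ _).trans hen
  set φ : (Σ F : Finset κ, (F → ℕ)) → Set (κ → ℝ) := fun p =>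
    ((p.1 : Set κ).pi fun i => if h : i ∈ p.1 then en (p.2 ⟨i, h⟩) else Set.univ) with hφ
  have hsub : { S : Set (κ → ℝ) | ∃ (U : κ → Set ℝ) (F : Finset κ),
      (∀ i, i ∈ F → U i ∈ bR) ∧ S = (F : Set κ).pi U } ⊆ Set.range φ := by
    rintro S ⟨U, F, hU, rfl⟩
    have hch : ∀ i : F, ∃ n : ℕ, en n = U i := fun i => by
      obtain ⟨n, hn⟩ := hen' (hU i i.2); exact ⟨n, hn⟩
    choose c hc using hch
    refine ⟨⟨F, c⟩, ?_⟩
    refine Set.pi_congr rfl fun i hi => ?_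
    simp only [Finset.mem_coe] at hi
    simp only [hφ]
    rw [dif_pos hi, hc ⟨i, hi⟩]
  calc Cardinal.mk ↥{ S : Set (κ → ℝ) | ∃ (U : κ → Set ℝ) (F : Finset κ),
        (∀ i, i ∈ F → U i ∈ bR) ∧ S = (F : Set κ).pi U }
      ≤ Cardinal.mk ↥(Set.range φ) := Cardinal.mk_le_mk_of_subset hsub
    _ ≤ Cardinal.mk (Σ F : Finset κ, (F → ℕ)) := Cardinal.mk_range_le
    _ = Cardinal.sum fun F : Finset κ => Cardinal.mk (F → ℕ) := Cardinal.mk_sigma _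
    _ ≤ Cardinal.sum fun _ : Finset κ => Cardinal.aleph0 :=
        Cardinal.sum_le_sum _ _ fun F => Cardinal.mk_le_aleph0
    _ = Cardinal.mk (Finset κ) * Cardinal.aleph0 := Cardinal.sum_const' _ _
    _ = Cardinal.mk κ * Cardinal.aleph0 := by rw [Cardinal.mk_finset_of_infinite]
    _ ≤ Cardinal.mk κ * Cardinal.mk κ := by
        exact mul_le_mul_right (Cardinal.aleph0_le_mk κ) _
    _ = Cardinal.mk κ := Cardinal.mul_eq_self (Cardinal.aleph0_le_mk κ)

/-- If some nonempty compact Hausdorff space has a cover by `ℵ₁` many closed `Gδ` sets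
with no countable subcover, then such a space can moreover be found of weight at
most `ℵ₁`, i.e. with a topological basis of cardinality at most `ℵ₁`. -/
theorem pseudoAronszajn_of_weight_aleph_one
    (h : ∃ (X : Type) (_ : TopologicalSpace X), CompactSpace X ∧ T2Space X ∧ Nonempty X ∧
      ∃ Z : Omega1Index → Set X,
        (∀ α, IsClosed (Z α)) ∧ (∀ α, IsGδ (Z α)) ∧ (⋃ α, Z α) = Set.univ ∧
        ¬ ∃ C : Set Omega1Index, C.Countable ∧ (⋃ α ∈ C, Z α) = Set.univ) :
    ∃ (Y : Type) (_ : TopologicalSpace Y), CompactSpace Y ∧ T2Space Y ∧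
      (∃ B : Set (Set Y), TopologicalSpace.IsTopologicalBasis B ∧
        Cardinal.mk B ≤ Cardinal.aleph 1) ∧
      ∃ Z : Omega1Index → Set Y,
        (∀ α, IsClosed (Z α)) ∧ (∀ α, IsGδ (Z α)) ∧ (⋃ α, Z α) = Set.univ ∧
        ¬ ∃ C : Set Omega1Index, C.Countable ∧ (⋃ α ∈ C, Z α) = Set.univ := by
  classical
  obtain ⟨X, tX, hcomp, ht2, hne, Z, hZc, hZg, hZu, hZnc⟩ := h
  -- an index type in `Type 0` of cardinality ℵ₁
  set κ : Type := (Cardinal.aleph 1 : Cardinal.{0}).out with hκ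
  have hmkκ : Cardinal.mk κ = Cardinal.aleph 1 := Cardinal.mk_out _
  haveI : Infinite κ := Cardinal.infinite_iff.mpr
    (by rw [hmkκ]; exact Cardinal.aleph0_le_aleph 1)
  have hmkI : Cardinal.mk Omega1Index = Cardinal.lift.{1,0} (Cardinal.aleph 1) := by
    have := Ordinal.mk_Iio_ordinal (Ordinal.omega 1)
    rwa [Ordinal.card_omega] at this
  have hmkU : Cardinal.mk Omega1Index = Cardinal.mk (ULift.{1} κ) := by
    rw [hmkI, Cardinal.mk_uLift, hmkκ]
  obtain ⟨e⟩ : Nonempty (Omega1Index ≃ ULift.{1} κ) := Cardinal.eq.mp hmkU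
  -- for each α, a continuous function whose fiber over 1 is exactly `Z α`
  have key : ∀ α : Omega1Index, ∃ f : C(X, ℝ), Z α = f ⁻¹' {1} := by
    intro α
    obtain ⟨f, hf, -⟩ := exists_continuous_one_zero_of_isCompact_of_isGδ
      ((hZc α).isCompact) (hZg α) isClosed_empty (Set.disjoint_empty _)
    exact ⟨f, hf⟩
  choose f hf using key
  -- the map into a product of ℵ₁ many copies of ℝ
  let g : X → (κ → ℝ) := fun x i => f (e.symm ⟨i⟩) x
  have hg : Continuous g := continuous_pi fun i => (f (e.symm ⟨i⟩)).continuous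
  refine ⟨↥(Set.range g), inferInstance, ?_, inferInstance, ?_, ?_⟩
  · exact isCompact_iff_compactSpace.mp (isCompact_range hg)
  · -- a basis of cardinality at most ℵ₁
    obtain ⟨bR, hbRc, -, hbR⟩ := TopologicalSpace.exists_countable_basis ℝ
    set B0 : Set (Set (κ → ℝ)) := { S | ∃ (U : κ → Set ℝ) (F : Finset κ),
      (∀ i, i ∈ F → U i ∈ bR) ∧ S = (F : Set κ).pi U } with hB0
    have hbB0 : TopologicalSpace.IsTopologicalBasis B0 :=
      isTopologicalBasis_pi fun _ => hbR
    refine ⟨(Set.preimage (Subtype.val : ↥(Set.range g) → (κ → ℝ))) '' B0,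
      isTopologicalBasis_subtype hbB0 _, ?_⟩
    calc Cardinal.mk ↥((Set.preimage (Subtype.val : ↥(Set.range g) → (κ → ℝ))) '' B0)
        ≤ Cardinal.mk ↥B0 := Cardinal.mk_image_le
      _ ≤ Cardinal.mk κ := my_mk_pi_basis_le hbRc
      _ = Cardinal.aleph 1 := hmkκ
  · -- the transported family of closed Gδ sets
    refine ⟨fun α => (fun y : ↥(Set.range g) => (y : κ → ℝ) ((e α).down)) ⁻¹' {1}, ?_, ?_, ?_, ?_⟩
    · intro α
      exact isClosed_singleton.preimage
        ((continuous_apply ((e α).down)).comp continuous_subtype_val)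
    · intro α
      exact my_isGδ_preimage
        ((continuous_apply ((e α).down)).comp continuous_subtype_val)
        (IsGδ.singleton (1 : ℝ))
    · ext y
      simp only [Set.mem_iUnion, Set.mem_univ, iff_true, Set.mem_preimage, Set.mem_singleton_iff]
      obtain ⟨x, hx⟩ := y.2
      have hxZ : x ∈ ⋃ α, Z α := hZu ▸ Set.mem_univ x
      obtain ⟨α, hα⟩ := Set.mem_iUnion.mp hxZ
      refine ⟨α, ?_⟩
      have h1 : f α x = 1 := by
        have := (hf α) ▸ hα
        simpa using this
      have : (y : κ → ℝ) ((e α).down) = g x ((e α).down) := by rw [hx]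
      rw [this]
      show f (e.symm ⟨(e α).down⟩) x = 1
      have : e.symm ⟨(e α).down⟩ = α := by
        rw [show (⟨(e α).down⟩ : ULift.{1} κ) = e α from rfl, Equiv.symm_apply_apply]
      rw [this, h1]
    · rintro ⟨C, hCc, hCu⟩
      refine hZnc ⟨C, hCc, ?_⟩
      ext x
      simp only [Set.mem_iUnion, Set.mem_univ, iff_true]
      have hy : (⟨g x, Set.mem_range_self x⟩ : ↥(Set.range g)) ∈
          ⋃ α ∈ C, {y : ↥(Set.range g) | (y : κ → ℝ) ((e α).down) = 1} :=
        hCu ▸ Set.mem_univ _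
      obtain ⟨α, hαC, hα⟩ := Set.mem_iUnion₂.mp hy
      refine ⟨α, hαC, ?_⟩
      have h1 : f (e.symm ⟨(e α).down⟩) x = 1 := hα
      have heq : e.symm ⟨(e α).down⟩ = α := by
        rw [show (⟨(e α).down⟩ : ULift.{1} κ) = e α from rfl, Equiv.symm_apply_apply]
      rw [heq] at h1
      rw [hf α]
      simpa using h1
end

section
/- The following are equivalent: (1) the space ℕ* admits a family of ℵ₁ many zero-sets whose union is ℕ* such that no countable subfamily has union ℕ*; (2) there exists a family A(α,n) (for α < ω₁ and n ∈ ℕ) of infinite subsets of ℕ such that (a) for every countable set C of ordinals below ω₁ there is a function f : C → ℕ such that the family {A(α, f(α)) : α ∈ C} has the strong finite intersection property, and (b) there is no function f : ω₁ → ℕ such that the family {A(α, f(α)) : α < ω₁} has the strong finite intersection property. -/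
/-!
For `S ⊆ ℕ` write `S*` for the closure of `S` in `βℕ`. Each `S*` is clopen, `(S ∩ T)* = S* ∩ T*`,
and `S*` meets `ℕ*` iff `S` is infinite; so, `ℕ*` being compact, a family of subsets of `ℕ` has
the strong finite intersection property iff some point of `ℕ*` lies in all the `S*`.

A zero-set of `ℕ*` is the complement in `ℕ*` of a countable union `⋃ n, A(n)*`: extend the
function `g` to `βℕ` (Tietze) and take `A(n) = {k : |g k| > 1/(n+1)}`. Conversely such a
complement is a zero-set, of `∑ n, 2⁻ⁿ 𝟙_{A(n)*}`. Matching the zero-set `Z(α)` with the row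
`A(α, ·)`, a point of `ℕ*` outside `⋃ α ∈ C, Z(α)` is a point lying in `A(α, f α)*` for all
`α ∈ C` and some selector `f`, which turns (1) into (2) and back.
-/

open Set Ordinal

/-- `ℕ*`, the Stone–Čech remainder of the discrete space `ℕ`. -/
abbrev NStar : Type := ((Set.range (stoneCechUnit : ℕ → StoneCech ℕ))ᶜ : Set (StoneCech ℕ))

theorem exists_continuousMap_preimage_zero_eq_compl_iUnion {X : Type*} [TopologicalSpace X]
    {U : ℕ → Set X} (hU : ∀ n, IsClopen (U n)) :
    ∃ g : C(X, ℝ), g ⁻¹' {0} = (⋃ n, U n)ᶜ := by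
  set term : ℕ → X → ℝ := fun n => (U n).indicator fun _ => (1 / 2 : ℝ) ^ n
  have hnonneg : ∀ n x, 0 ≤ term n x := fun n x => indicator_nonneg (fun _ _ => by positivity) x
  have hle : ∀ n x, term n x ≤ (1 / 2) ^ n := fun n x =>
    indicator_le_self' (fun _ _ => by positivity) x
  refine ⟨⟨fun x => ∑' n, term n x, continuous_tsum
    (fun n => (hU n).continuous_indicator continuous_const) summable_geometric_two
    fun n x => (Real.norm_of_nonneg (hnonneg n x)).trans_le (hle n x)⟩, ?_⟩
  ext x
  have hsum : Summable (term · x) :=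
    summable_geometric_two.of_nonneg_of_le (hnonneg · x) (hle · x)
  rw [mem_preimage, ContinuousMap.coe_mk, mem_singleton_iff, ← hsum.hasSum_iff,
    hasSum_zero_iff_of_nonneg (hnonneg · x)]
  simp [funext_iff, term]

namespace StoneCech

theorem ne_zero_iff_exists_mem_closure_image {α : Type*} [TopologicalSpace α]
    (G : C(StoneCech α, ℝ)) (x : StoneCech α) :
    G x ≠ 0 ↔
      ∃ n : ℕ, x ∈ closure (stoneCechUnit '' {a | 1 / ((n : ℝ) + 1) < |G (stoneCechUnit a)|}) := by
  constructor
  · intro hx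
    obtain ⟨n, hn⟩ := exists_nat_one_div_lt (abs_pos.mpr hx : 0 < |G x|)
    have hopen : IsOpen {y | 1 / ((n : ℝ) + 1) < |G y|} :=
      isOpen_lt continuous_const (continuous_abs.comp G.continuous)
    refine ⟨n, closure_mono ?_ (denseRange_stoneCechUnit.open_subset_closure_inter hopen hn)⟩
    rintro _ ⟨hy, a, rfl⟩
    exact ⟨a, hy, rfl⟩
  · rintro ⟨n, hn⟩ hx
    have hclosed : IsClosed {y | 1 / ((n : ℝ) + 1) ≤ |G y|} :=
      isClosed_le continuous_const (continuous_abs.comp G.continuous)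
    have hle : 1 / ((n : ℝ) + 1) ≤ |G x| :=
      hclosed.closure_subset_iff.mpr (by rintro _ ⟨a, ha, rfl⟩; exact le_of_lt ha.out) hn
    rw [hx, abs_zero] at hle
    exact hle.not_gt Nat.one_div_pos_of_nat

variable {α : Type*} [TopologicalSpace α] [DiscreteTopology α]

open Classical in
noncomputable def extendIndicator (S : Set α) : StoneCech α → Bool :=
  stoneCechExtend (g := fun a => decide (a ∈ S)) continuous_of_discreteTopology

theorem continuous_extendIndicator (S : Set α) : Continuous (extendIndicator S) :=
  continuous_stoneCechExtend _

open Classical in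
theorem extendIndicator_stoneCechUnit (S : Set α) (a : α) :
    extendIndicator S (stoneCechUnit a) = decide (a ∈ S) :=
  stoneCechExtend_stoneCechUnit _ a

theorem extendIndicator_inter (S T : Set α) (x : StoneCech α) :
    extendIndicator (S ∩ T) x = (extendIndicator S x && extendIndicator T x) := by
  refine congrFun (stoneCech_hom_ext (g₂ := fun y => extendIndicator S y && extendIndicator T y)
    (continuous_extendIndicator _) ?_ ?_) x
  · exact (continuous_of_discreteTopology (f := fun p : Bool × Bool => p.1 && p.2)).comp
      ((continuous_extendIndicator S).prodMk (continuous_extendIndicator T))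
  · ext a
    simp only [Function.comp_apply, extendIndicator_stoneCechUnit]
    rw [Bool.eq_iff_iff]
    simp

theorem mem_closure_image_iff (S : Set α) (x : StoneCech α) :
    x ∈ closure (stoneCechUnit '' S) ↔ extendIndicator S x = true := by
  have hclopen : IsClopen (extendIndicator S ⁻¹' {true}) :=
    (isClopen_discrete _).preimage (continuous_extendIndicator S)
  have himage : extendIndicator S ⁻¹' {true} ∩ range stoneCechUnit = stoneCechUnit '' S := by
    ext y
    constructor
    · rintro ⟨hy, a, rfl⟩
      exact ⟨a, by simpa [extendIndicator_stoneCechUnit] using hy, rfl⟩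
    · rintro ⟨a, ha, rfl⟩
      simpa [extendIndicator_stoneCechUnit] using ha
  constructor
  · exact fun hx => hclopen.isClosed.closure_subset_iff.mpr (himage ▸ inter_subset_left) hx
  · intro hx
    rw [← himage]
    exact denseRange_stoneCechUnit.open_subset_closure_inter hclopen.isOpen hx

theorem isClopen_closure_image (S : Set α) : IsClopen (closure (stoneCechUnit '' S)) := by
  have : closure (stoneCechUnit '' S) = extendIndicator S ⁻¹' {true} := by
    ext x; exact mem_closure_image_iff S x
  rw [this]
  exact (isClopen_discrete _).preimage (continuous_extendIndicator S)

theorem closure_image_inter (S T : Set α) :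
    closure (stoneCechUnit '' (S ∩ T)) =
      closure (stoneCechUnit '' S) ∩ closure (stoneCechUnit '' T) := by
  ext x
  simp [mem_closure_image_iff, extendIndicator_inter]

theorem closure_image_biInter {ι : Type*} (F : Finset ι) (S : ι → Set α) :
    closure (stoneCechUnit '' ⋂ i ∈ F, S i) = ⋂ i ∈ F, closure (stoneCechUnit '' S i) := by
  classical
  induction F using Finset.induction_on with
  | empty => simp [denseRange_stoneCechUnit.closure_range]
  | insert a F _ ih => simp only [Finset.set_biInter_insert, closure_image_inter, ih]

theorem stoneCechUnit_mem_closure_image_iff {S : Set α} {a : α} :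
    stoneCechUnit a ∈ closure (stoneCechUnit '' S) ↔ a ∈ S := by
  simp [mem_closure_image_iff, extendIndicator_stoneCechUnit]

theorem isClopen_singleton_stoneCechUnit (a : α) : IsClopen {stoneCechUnit a} := by
  simpa [closure_singleton] using isClopen_closure_image {a}

theorem isOpen_range_stoneCechUnit : IsOpen (range (stoneCechUnit : α → StoneCech α)) := by
  rw [← iUnion_singleton_eq_range]
  exact isOpen_iUnion fun a => (isClopen_singleton_stoneCechUnit a).isOpen

variable (α) in
abbrev remainder : Set (StoneCech α) := (range stoneCechUnit)ᶜ

theorem isCompact_remainder : IsCompact (remainder α) :=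
  isOpen_range_stoneCechUnit.isClosed_compl.isCompact

theorem infinite_iff_exists_mem_remainder_closure_image (S : Set α) :
    S.Infinite ↔ ∃ x ∈ remainder α, x ∈ closure (stoneCechUnit '' S) := by
  constructor
  · intro hS
    by_contra! hsub
    have hclosure : closure (stoneCechUnit '' S) = stoneCechUnit '' S := by
      refine (subset_closure).antisymm' fun x hx => ?_
      obtain ⟨a, rfl⟩ := not_not.mp (hsub x · hx)
      exact ⟨a, stoneCechUnit_mem_closure_image_iff.mp hx, rfl⟩
    have hcompact : IsCompact S := by
      rw [isEmbedding_stoneCechUnit.isCompact_iff, ← hclosure]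
      exact isClosed_closure.isCompact
    exact hS hcompact.finite_of_discrete
  · rintro ⟨x, hx, hxS⟩ hS
    rw [(hS.image stoneCechUnit).isClosed.closure_eq] at hxS
    exact hx (image_subset_range _ _ hxS)

theorem forall_finset_infinite_iff {ι : Type*} (S : ι → Set α) (C : Set ι) :
    (∀ F : Finset ι, ↑F ⊆ C → (⋂ i ∈ F, S i).Infinite) ↔
      ∃ x ∈ remainder α, ∀ i ∈ C, x ∈ closure (stoneCechUnit '' S i) := by
  simp_rw [infinite_iff_exists_mem_remainder_closure_image, closure_image_biInter, mem_iInter₂]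
  constructor
  · intro h
    obtain ⟨x, hx, hxC⟩ := isCompact_remainder.inter_iInter_nonempty
      (fun i : C => closure (stoneCechUnit '' S i)) (fun _ => isClosed_closure) fun u => by
        obtain ⟨x, hx, hxu⟩ := h (u.map (Function.Embedding.subtype _)) (by simp)
        exact ⟨x, hx, mem_iInter₂.mpr fun i hi => hxu i (Finset.mem_map_of_mem _ hi)⟩
    exact ⟨x, hx, fun i hi => mem_iInter.mp hxC ⟨i, hi⟩⟩
  · rintro ⟨x, hx, hxC⟩ F hF
    exact ⟨x, hx, fun i hi => hxC i (hF hi)⟩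

theorem exists_infinite_cozero_eq_iUnion_closure_image (g : C(remainder α, ℝ))
    (hg : ∃ x, g x ≠ 0) :
    ∃ A : ℕ → Set α, (∀ n, (A n).Infinite) ∧
      ∀ x : remainder α, g x ≠ 0 ↔ ∃ n, ↑x ∈ closure (stoneCechUnit '' A n) := by
  obtain ⟨G, hG⟩ := g.exists_restrict_eq isOpen_range_stoneCechUnit.isClosed_compl
  set B : ℕ → Set α := fun n => {a | 1 / ((n : ℝ) + 1) < |G (stoneCechUnit a)|}
  have hB : ∀ x : remainder α, g x ≠ 0 ↔ ∃ n, ↑x ∈ closure (stoneCechUnit '' B n) := fun x => by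
    rw [← hG]
    exact ne_zero_iff_exists_mem_closure_image G x
  obtain ⟨x₀, hx₀⟩ := hg
  obtain ⟨n₀, hn₀⟩ := (hB x₀).mp hx₀
  have hinf : (B n₀).Infinite :=
    (infinite_iff_exists_mem_remainder_closure_image _).mpr ⟨x₀, x₀.2, hn₀⟩
  refine ⟨fun n => B n ∪ B n₀, fun n => hinf.mono subset_union_right, fun x => ?_⟩
  simp only [image_union, closure_union, mem_union, hB]
  exact ⟨fun ⟨n, hn⟩ => ⟨n, .inl hn⟩, fun ⟨n, hn⟩ => hn.elim (⟨n, ·⟩) (⟨n₀, ·⟩)⟩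

theorem iUnion_ne_univ_iff_exists_selector {ι : Type*} {A : ι → ℕ → Set α}
    {Z : ι → Set (remainder α)}
    (hZ : ∀ i x, x ∉ Z i ↔ ∃ n, ↑x ∈ closure (stoneCechUnit '' A i n)) (C : Set ι) :
    (⋃ i ∈ C, Z i) ≠ Set.univ ↔
      ∃ f : ι → ℕ, ∀ F : Finset ι, ↑F ⊆ C → (⋂ i ∈ F, A i (f i)).Infinite := by
  simp only [forall_finset_infinite_iff, ne_eq, eq_univ_iff_forall, not_forall, mem_iUnion₂,
    not_exists, hZ]
  constructor
  · rintro ⟨x, hx⟩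
    choose f hf using fun i => (em (i ∈ C)).elim (fun hi => (hx i hi).imp fun _ h _ => h)
      fun hi => ⟨0, fun h => absurd h hi⟩
    exact ⟨f, x, x.2, hf⟩
  · rintro ⟨f, x, hx, hf⟩
    exact ⟨⟨x, hx⟩, fun i hi => ⟨f i, hf i hi⟩⟩

end StoneCech

/-- `ℕ*` has a cover by `ℵ₁` many zero-sets with no countable subcover if and only if
there is an `ω₁ × ω` matrix `A(α,n)` of infinite subsets of `ℕ` such that
(a) for every countable `C ⊆ ω₁` some selector `f` makes `{A(α, f α) : α ∈ C}` have the
strong finite intersection property, and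
(b) no selector `f` makes the whole family `{A(α, f α) : α < ω₁}` have the strong finite
intersection property. -/
theorem cover_of_NStar_iff_matrix :
    (∃ Z : Omega1Index → Set NStar,
      (∀ α, ∃ g : C(NStar, ℝ), Z α = g ⁻¹' {0}) ∧ (⋃ α, Z α) = Set.univ ∧
      ¬ ∃ C : Set Omega1Index, C.Countable ∧ (⋃ α ∈ C, Z α) = Set.univ)
    ↔
    (∃ A : Omega1Index → ℕ → Set ℕ,
      (∀ α n, (A α n).Infinite) ∧
      (∀ C : Set Omega1Index, C.Countable →
        ∃ f : Omega1Index → ℕ, ∀ F : Finset Omega1Index, ↑F ⊆ C →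
          (⋂ α ∈ F, A α (f α)).Infinite) ∧
      ¬ ∃ f : Omega1Index → ℕ, ∀ F : Finset Omega1Index,
          (⋂ α ∈ F, A α (f α)).Infinite) := by
  constructor
  · rintro ⟨Z, hzero, hcover, hnosub⟩
    choose g hg using hzero
    have hne : ∀ α, ∃ x, g α x ≠ 0 := fun α => by
      by_contra! h
      exact hnosub ⟨{α}, countable_singleton α, by simp [hg, h]⟩
    choose A hAinf hA using fun α =>
      StoneCech.exists_infinite_cozero_eq_iUnion_closure_image (g α) (hne α)
    have hZ : ∀ α x, x ∉ Z α ↔ ∃ n, ↑x ∈ closure (stoneCechUnit '' A α n) := fun α x => by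
      rw [hg α]
      exact hA α x
    refine ⟨A, hAinf, fun C hC => ?_, fun hf => ?_⟩
    · exact (StoneCech.iUnion_ne_univ_iff_exists_selector hZ C).mp fun h => hnosub ⟨C, hC, h⟩
    · exact (StoneCech.iUnion_ne_univ_iff_exists_selector hZ Set.univ).mpr (by simpa using hf)
        (by simpa using hcover)
  · rintro ⟨A, hAinf, hsel, hnosel⟩
    set Z : Omega1Index → Set NStar :=
      fun α => (⋃ n, Subtype.val ⁻¹' closure (stoneCechUnit '' A α n))ᶜ
    have hZ : ∀ α x, x ∉ Z α ↔ ∃ n, ↑x ∈ closure (stoneCechUnit '' A α n) := by simp [Z]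
    refine ⟨Z, fun α => ?_, ?_, fun ⟨C, hC, hcover⟩ => ?_⟩
    · obtain ⟨g, hg⟩ := exists_continuousMap_preimage_zero_eq_compl_iUnion fun n =>
        (StoneCech.isClopen_closure_image (A α n)).preimage continuous_subtype_val
      exact ⟨g, hg.symm⟩
    · by_contra hcover
      exact hnosel (by simpa using
        (StoneCech.iUnion_ne_univ_iff_exists_selector hZ Set.univ).mp (by simpa using hcover))
    · exact (StoneCech.iUnion_ne_univ_iff_exists_selector hZ C).mpr (hsel C hC) hcover
end

section
/- There exists a family A(α,n) (for α < ω₁ and n ∈ ℕ) of infinite subsets of ℕ such that (a) for every countable set C of ordinals below ω₁ there is a function f : C → ℕ such that the family {A(α, f(α)) : α ∈ C} has the strong finite intersection property, and (b) there is no function f : ω₁ → ℕ such that the family {A(α, f(α)) : α < ω₁} has the strong finite intersection property. -/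
open Set Ordinal

/-!
Fix distinct branches `x α : ℕ → Bool`. A row `α` with label `σ` is the set of finite strings
which, read as colourings of the nodes of the binary tree, colour the node of length `k` on
`x α` by the `k`-th digit of `x α` overwritten by `σ`. Finitely many rows have infinite
intersection as soon as their demands agree on every common node, and finite intersection
otherwise.

For countably many branches, colour each node by the next digit of the first branch (in an
enumeration) passing through it; a branch disagrees with this colouring only on the finitely
many nodes it shares with earlier branches, so some label realises it. For uncountably many,
some label `σ` is used uncountably often, so it is given to two branches agreeing up to `|σ|`,
and these demand different colours at their splitting node.
-/

open Function PiNat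

namespace PiNat

variable {α : Type*} {x y : ℕ → α} {n : ℕ}

theorem res_eq_res_iff_le_firstDiff (hxy : x ≠ y) : res x n = res y n ↔ n ≤ firstDiff x y := by
  rw [res_eq_res]
  refine ⟨fun h => ?_, fun h m hm => apply_eq_of_lt_firstDiff (hm.trans_le h)⟩
  by_contra! hlt
  exact apply_firstDiff_ne hxy (h hlt)

theorem finite_setOf_res_eq (hxy : x ≠ y) : {n | res x n = res y n}.Finite :=
  (finite_Iic (firstDiff x y)).subset fun _ hn => (res_eq_res_iff_le_firstDiff hxy).mp hn

end PiNat

namespace AronszajnMatrix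

section Strings

variable {γ β ι : Type*}

def Compatible (p q : γ → Option β) : Prop := ∀ t, ∀ b ∈ p t, ∀ c ∈ q t, b = c

theorem compatible_self (p : γ → Option β) : Compatible p p :=
  fun _ _ hb _ hc => Option.mem_unique hb hc

/-- A string `u` is read as the colouring `i ↦ u[i]` of the first `u.length` points of `γ`. -/
def consistentStrings (e : ℕ ≃ γ) (p : γ → Option β) : Set (List β) :=
  {u | ∀ (i : ℕ) (hi : i < u.length), ∀ b ∈ p (e i), u[i] = b}

theorem infinite_biInter_consistentStrings [Inhabited β] (e : ℕ ≃ γ) {s : Set ι}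
    {p : ι → γ → Option β} (hp : s.Pairwise fun a b => Compatible (p a) (p b)) :
    (⋂ a ∈ s, consistentStrings e (p a)).Infinite := by
  classical
  have hcompat : ∀ a ∈ s, ∀ a' ∈ s, Compatible (p a) (p a') := by
    intro a ha a' ha'
    rcases eq_or_ne a a' with rfl | hne
    exacts [compatible_self _, hp ha ha' hne]
  let colour (t : γ) : β :=
    if h : ∃ a ∈ s, (p a t).isSome then (p h.choose t).get h.choose_spec.2 else default
  have hcolour : ∀ a ∈ s, ∀ t, ∀ b ∈ p a t, colour t = b := by
    intro a ha t b hb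
    have h : ∃ a ∈ s, (p a t).isSome := ⟨a, ha, by simp [Option.mem_def.mp hb]⟩
    simp only [colour, dif_pos h]
    exact hcompat _ h.choose_spec.1 a ha t _ (Option.get_mem _) b hb
  refine infinite_of_injective_forall_mem
    (f := fun n => List.ofFn fun i : Fin n => colour (e i)) ?_ fun n => ?_
  · intro m n hmn
    simpa using congrArg List.length hmn
  · simp only [mem_iInter₂]
    intro a ha i hi b hb
    simpa using hcolour a ha _ b hb

theorem finite_consistentStrings_inter_of_not_compatible [Finite β] (e : ℕ ≃ γ)
    {p q : γ → Option β} (hpq : ¬Compatible p q) :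
    (consistentStrings e p ∩ consistentStrings e q).Finite := by
  simp only [Compatible, not_forall] at hpq
  obtain ⟨t, b, hb, c, hc, hbc⟩ := hpq
  refine (List.finite_length_le β (e.symm t)).subset fun u ⟨hup, huq⟩ => ?_
  by_contra hlong
  replace hlong : e.symm t < u.length := by simpa using hlong
  have hpos : p (e (e.symm t)) = some b ∧ q (e (e.symm t)) = some c := by simpa using ⟨hb, hc⟩
  exact hbc ((hup _ hlong b hpos.1).symm.trans (huq _ hlong c hpos.2))

end Strings

section Tree

variable {α ι : Type*}

def patch (σ : List α) (g : ℕ → α) (k : ℕ) : α := σ.getD k (g k)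

theorem exists_patch_eq {g y : ℕ → α} (hfin : {k | y k ≠ g k}.Finite) : ∃ σ, patch σ g = y := by
  obtain ⟨N, hN⟩ := hfin.bddAbove
  refine ⟨List.ofFn fun k : Fin (N + 1) => y k, funext fun k => ?_⟩
  rcases lt_or_ge k (N + 1) with hk | hk
  · rw [patch, List.getD_eq_getElem _ _ (by simpa using hk), List.getElem_ofFn]
  · have hyg : y k = g k := by
      by_contra hne
      have := hN hne
      omega
    rw [patch, List.getD_eq_default _ _ (by simpa using hk), hyg]

def Coherent (g : ℕ → α) (σ : List α) (h : ℕ → α) (τ : List α) : Prop :=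
  ∀ k, res g k = res h k → patch σ g k = patch τ h k

open Classical in
noncomputable def nodeBits (g : ℕ → α) (σ : List α) (t : List α) : Option α :=
  if res g t.length = t then some (patch σ g t.length) else none

theorem compatible_nodeBits_iff {g h : ℕ → α} {σ τ : List α} :
    Compatible (nodeBits g σ) (nodeBits h τ) ↔ Coherent g σ h τ := by
  constructor
  · intro hc k hk
    exact hc (res g k) _ (by simp [nodeBits]) _ (by simp [nodeBits, hk])
  · intro hc t b hb c hc'
    simp only [nodeBits, Option.mem_def, Option.ite_none_right_eq_some, Option.some.injEq]
      at hb hc'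
    obtain ⟨hgt, rfl⟩ := hb
    obtain ⟨hht, rfl⟩ := hc'
    exact hc _ (hgt.trans hht.symm)

theorem not_coherent_of_eqOn_length {g h : ℕ → α} {σ : List α} (hgh : g ≠ h)
    (hσ : ∀ k < σ.length, g k = h k) : ¬Coherent g σ h σ := by
  intro hc
  have hlen : σ.length ≤ firstDiff g h := by
    by_contra! hlt
    exact apply_firstDiff_ne hgh (hσ _ hlt)
  have := hc _ ((res_eq_res_iff_le_firstDiff hgh).mpr le_rfl)
  simp only [patch, List.getD_eq_default _ _ hlen] at this
  exact apply_firstDiff_ne hgh this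

theorem exists_infinite_fiber_of_uncountable {κ : Type*} [Uncountable ι] [Countable κ]
    (f : ι → κ) : ∃ k, (f ⁻¹' {k}).Infinite := by
  by_contra! hfin
  refine not_countable_univ (α := ι) ?_
  rw [← preimage_univ (f := f), ← iUnion_of_singleton, preimage_iUnion]
  exact countable_iUnion fun k => (hfin k).countable

theorem exists_ne_not_coherent [Finite α] [Uncountable ι] {x : ι → ℕ → α} (hx : Injective x)
    (L : ι → List α) : ∃ a b, a ≠ b ∧ ¬Coherent (x a) (L a) (x b) (L b) := by
  obtain ⟨σ, hσ⟩ := exists_infinite_fiber_of_uncountable L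
  obtain ⟨a, ha, b, hb, hab, heq⟩ := hσ.exists_ne_map_eq_of_mapsTo
    (mapsTo_univ (fun a (k : Fin σ.length) => x a k) _) finite_univ
  refine ⟨a, b, hab, ?_⟩
  rw [show L a = σ from ha, show L b = σ from hb]
  exact not_coherent_of_eqOn_length (hx.ne hab) fun k hk => congrFun heq ⟨k, hk⟩

open Classical in
noncomputable def nodeColour [Inhabited α] (S : Set (ℕ → α)) (r : (ℕ → α) → ℕ) (t : List α) : α :=
  if h : {g ∈ S | res g t.length = t}.Nonempty then
    argminOn r _ h t.length
  else default

theorem exists_nodeColour_res_eq [Inhabited α] {S : Set (ℕ → α)} (r : (ℕ → α) → ℕ)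
    {g : ℕ → α} (hg : g ∈ S) (k : ℕ) :
    ∃ m ∈ S, r m ≤ r g ∧ res m k = res g k ∧ nodeColour S r (res g k) = m k := by
  have hg' : g ∈ {h ∈ S | res h (res g k).length = res g k} := ⟨hg, by rw [res_length]⟩
  rw [nodeColour, dif_pos ⟨g, hg'⟩]
  obtain ⟨hmS, hmk⟩ := argminOn_mem r _ ⟨g, hg'⟩
  exact ⟨_, hmS, argminOn_le r _ hg', by simpa using hmk, congrArg _ (res_length g k)⟩

theorem finite_setOf_nodeColour_ne [Inhabited α] {S : Set (ℕ → α)} {r : (ℕ → α) → ℕ}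
    (hr : InjOn r S) {g : ℕ → α} (hg : g ∈ S) :
    {k | nodeColour S r (res g k) ≠ g k}.Finite := by
  have hbelow : {h ∈ S | r h ≤ r g}.Finite :=
    Finite.of_finite_image ((finite_Iic (r g)).subset (image_subset_iff.mpr fun _ h => h.2))
      (hr.mono fun _ h => h.1)
  refine ((hbelow.sdiff (t := {g})).biUnion fun h hh => finite_setOf_res_eq hh.2).subset
    fun k hk => ?_
  obtain ⟨m, hmS, hmr, hmk, hcol⟩ := exists_nodeColour_res_eq r hg k
  refine mem_iUnion₂.mpr ⟨m, ⟨⟨hmS, hmr⟩, fun hmg => hk ?_⟩, hmk⟩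
  rw [hcol, mem_singleton_iff.mp hmg]

theorem exists_coherent_labels [Inhabited α] {S : Set (ℕ → α)} (hS : S.Countable) :
    ∃ L : (ℕ → α) → List α, S.Pairwise fun g h => Coherent g (L g) h (L h) := by
  obtain ⟨r, hr⟩ := countable_iff_exists_injOn.mp hS
  have hL : ∀ g ∈ S, ∃ σ, patch σ g = fun k => nodeColour S r (res g k) := fun g hg =>
    exists_patch_eq (by simpa [ne_comm] using finite_setOf_nodeColour_ne hr hg)
  choose! L hL using hL
  refine ⟨L, fun g hg h hh _ k hk => ?_⟩
  rw [hL g hg, hL h hh]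
  exact congrArg (nodeColour S r) hk

end Tree

theorem mk_omega1Index : Cardinal.mk Omega1Index = Cardinal.aleph 1 := by
  change Cardinal.mk (Iio (Ordinal.omega 1)) = _
  rw [Cardinal.mk_Iio_ordinal, Ordinal.card_omega]
  simp

instance uncountable_omega1Index : Uncountable Omega1Index := by
  rw [← Cardinal.aleph0_lt_mk_iff, mk_omega1Index]
  exact Cardinal.aleph0_lt_aleph_one

theorem exists_injective_omega1Index : ∃ x : Omega1Index → ℕ → Bool, Function.Injective x := by
  have : Cardinal.lift.{0} (Cardinal.mk Omega1Index) ≤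
      Cardinal.lift.{1} (Cardinal.mk (ℕ → Bool)) := by
    simpa [mk_omega1Index] using Cardinal.aleph_one_le_continuum
  obtain ⟨x⟩ := Cardinal.lift_mk_le'.mp this
  exact ⟨x, x.injective⟩

end AronszajnMatrix

open AronszajnMatrix in
/-- There is an `ω₁ × ω` matrix `A(α,n)` of infinite subsets of `ℕ` such that
(a) for every countable `C ⊆ ω₁` some selector `f` makes `{A(α, f α) : α ∈ C}` have the
strong finite intersection property, and
(b) no selector `f` makes the whole family `{A(α, f α) : α < ω₁}` have the strong finite
intersection property. -/
theorem exists_aronszajn_matrix :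
    ∃ A : Omega1Index → ℕ → Set ℕ,
      (∀ α n, (A α n).Infinite) ∧
      (∀ C : Set Omega1Index, C.Countable →
        ∃ f : Omega1Index → ℕ, ∀ F : Finset Omega1Index, ↑F ⊆ C →
          (⋂ α ∈ F, A α (f α)).Infinite) ∧
      ¬ ∃ f : Omega1Index → ℕ, ∀ F : Finset Omega1Index,
          (⋂ α ∈ F, A α (f α)).Infinite := by
  obtain ⟨x, hx⟩ := exists_injective_omega1Index
  let e : ℕ ≃ List Bool := (Denumerable.ofEncodableOfInfinite (List Bool)).eqv.symm
  let B (α : Omega1Index) (σ : List Bool) : Set (List Bool) :=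
    consistentStrings e (nodeBits (x α) σ)
  refine ⟨fun α n => e.symm '' B α (e n), fun α n => ?_, fun C hC => ?_, ?_⟩
  · have := infinite_biInter_consistentStrings e (pairwise_singleton α fun a b =>
      Compatible (nodeBits (x a) (e n)) (nodeBits (x b) (e n)))
    rw [biInter_singleton] at this
    exact this.image e.symm.injective.injOn
  · obtain ⟨L, hL⟩ := exists_coherent_labels (hC.image x)
    refine ⟨fun α => e.symm (L (x α)), fun F hF => ?_⟩
    have hcoh : (F : Set Omega1Index).Pairwise fun a b =>
        Compatible (nodeBits (x a) (L (x a))) (nodeBits (x b) (L (x b))) :=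
      fun a ha b hb hab => compatible_nodeBits_iff.mpr <|
        hL (mem_image_of_mem x (hF ha)) (mem_image_of_mem x (hF hb)) (hx.ne hab)
    rw [← image_iInter₂ e.symm.bijective]
    simpa [B] using (infinite_biInter_consistentStrings e hcoh).image e.symm.injective.injOn
  · rintro ⟨f, hf⟩
    obtain ⟨a, b, hab, hnc⟩ := exists_ne_not_coherent hx fun α => e (f α)
    apply hf {a, b}
    rw [← image_iInter₂ e.symm.bijective, Finset.set_biInter_insert,
      Finset.set_biInter_singleton]
    exact (finite_consistentStrings_inter_of_not_compatible e
      (compatible_nodeBits_iff.not.mpr hnc)).image _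
end

section
/- The space ℕ* admits a family of ℵ₁ many zero-sets whose union is ℕ* such that no countable subfamily has union ℕ*. -/
open Set Ordinal

noncomputable section
namespace NStarAux

open Cardinal Filter

/-! ### Cardinality facts about `Omega1Index` -/

lemma mk_omega1 : #Omega1Index = Cardinal.lift.{1,0} (ℵ_ 1) := by
  have h : #Omega1Index = #(Set.Iio (Ordinal.omega 1)) := rfl
  rw [h, Ordinal.mk_Iio_ordinal, Ordinal.card_omega]

lemma aleph0_le_mk_omega1 : ℵ₀ ≤ #Omega1Index := by
  rw [mk_omega1, ← Cardinal.lift_aleph0.{1,0}, Cardinal.lift_le]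
  exact Cardinal.aleph0_le_aleph 1

lemma not_countable_omega1 : ¬ Countable Omega1Index := by
  intro h
  have h1 : #Omega1Index ≤ ℵ₀ := Cardinal.mk_le_aleph0_iff.mpr h
  rw [mk_omega1, ← Cardinal.lift_aleph0.{1,0}, Cardinal.lift_le] at h1
  exact absurd (lt_of_lt_of_le Cardinal.aleph0_lt_aleph_one h1) (lt_irrefl _)

lemma mk_cantor : #(ℕ → Bool) = 𝔠 := by
  rw [← Cardinal.power_def, Cardinal.mk_bool, Cardinal.mk_nat, Cardinal.two_power_aleph0]

lemma exists_embed : Nonempty (Omega1Index ↪ (ℕ → Bool)) := by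
  rw [← Cardinal.lift_mk_le', Cardinal.lift_uzero, mk_omega1, mk_cantor, Cardinal.lift_le]
  exact Cardinal.aleph_one_le_continuum

lemma exists_pair : Nonempty (Omega1Index ≃ Omega1Index × Omega1Index) := by
  apply Cardinal.eq.mp
  rw [Cardinal.mk_prod, Cardinal.lift_id,
    Cardinal.mul_eq_self aleph0_le_mk_omega1]

/-! ### An independent family of functions on a countable base type -/

abbrev BB : Type := Σ j : ℕ, ((Fin j → Bool) → ℕ)

instance : Infinite BB :=
  Infinite.of_injective (fun j : ℕ => (⟨j, fun _ => 0⟩ : BB))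
    (fun _ _ h => congrArg Sigma.fst h)

def e : ℕ ≃ BB := by
  haveI : Encodable BB := Encodable.ofCountable _
  haveI : Denumerable BB := Denumerable.ofEncodableOfInfinite BB
  exact (Denumerable.eqv BB).symm

def Ffn (x : ℕ → Bool) (b : BB) : ℕ := b.2 (fun i => x i)

open Classical in
/-- a difference point of two distinct functions -/
def dpt (a b : ℕ → Bool) : ℕ :=
  if h : ∃ n, a n ≠ b n then h.choose else 0

lemma dpt_spec {a b : ℕ → Bool} (h : a ≠ b) : a (dpt a b) ≠ b (dpt a b) := by
  have h' : ∃ n, a n ≠ b n := Function.ne_iff.mp h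
  rw [dpt]
  rw [dif_pos h']
  exact h'.choose_spec

/-- Independence: any finite pattern of prescribed values is realized on an
infinite subset of `BB`. -/
lemma indep (m' : (ℕ → Bool) → ℕ) (s : Finset (ℕ → Bool)) :
    {b : BB | ∀ w ∈ s, Ffn w b = m' w}.Infinite := by
  classical
  set J : ℕ := (s.sup fun a => s.sup fun b => dpt a b) + 1 with hJ
  have key : ∀ j, J ≤ j → ∀ w ∈ s, ∀ w' ∈ s,
      ((fun i : Fin j => w (i : ℕ)) = fun i : Fin j => w' (i : ℕ)) → w = w' := by
    intro j hj w hw w' hw' heq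
    by_contra hne
    have hd : dpt w w' < j := by
      have h1 : dpt w w' ≤ s.sup fun b => dpt w b := Finset.le_sup (f := fun b => dpt w b) hw'
      have h2 : (s.sup fun b => dpt w b) ≤ s.sup fun a => s.sup fun b => dpt a b :=
        Finset.le_sup (f := fun a => s.sup fun b => dpt a b) hw
      omega
    exact dpt_spec hne (congrFun heq ⟨dpt w w', hd⟩)
  set σ : ∀ j : ℕ, (Fin j → Bool) → ℕ := fun j t =>
    if h : ∃ w ∈ s, t = fun i : Fin j => w (i : ℕ) then m' h.choose else 0 with hσ
  apply Set.infinite_of_injective_forall_mem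
    (f := fun k : ℕ => (⟨J + k, σ (J + k)⟩ : BB))
  · intro k l h
    have := congrArg Sigma.fst h
    simpa using this
  · intro k
    rw [Set.mem_setOf_eq]
    intro w hw
    have hex : ∃ w' ∈ s, (fun i : Fin (J + k) => w (i : ℕ)) = fun i : Fin (J + k) => w' (i : ℕ) :=
      ⟨w, hw, rfl⟩
    have h1 : Ffn w ⟨J + k, σ (J + k)⟩ = σ (J + k) (fun i : Fin (J + k) => w (i : ℕ)) := rfl
    rw [h1, hσ]
    simp only [dif_pos hex]
    have hch := hex.choose_spec
    have : hex.choose = w := (key (J + k) (Nat.le_add_right _ _) _ hch.1 w hw hch.2.symm)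
    rw [this]

/-! ### Real-valued functions on the Stone–Čech compactification -/

lemma cval_aux (m : ℕ) : ((m : ℝ) + 1)⁻¹ ∈ Set.Icc (0:ℝ) 1 :=
  ⟨by positivity, inv_le_one_of_one_le₀ (by
    have : (0:ℝ) ≤ (m : ℝ) := Nat.cast_nonneg _
    linarith)⟩

def cval (m : ℕ) : Set.Icc (0:ℝ) 1 := ⟨((m : ℝ) + 1)⁻¹, cval_aux m⟩

def ufn (x : ℕ → Bool) : ℕ → Set.Icc (0:ℝ) 1 := fun n => cval (Ffn x (e n))

def Ux (x : ℕ → Bool) : StoneCech ℕ → ℝ := fun z =>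
  ((stoneCechExtend (continuous_of_discreteTopology (f := ufn x)) z : Set.Icc (0:ℝ) 1) : ℝ)

lemma continuous_Ux (x : ℕ → Bool) : Continuous (Ux x) :=
  continuous_subtype_val.comp (continuous_stoneCechExtend _)

lemma Ux_unit (x : ℕ → Bool) (n : ℕ) :
    Ux x (stoneCechUnit n) = ((Ffn x (e n) : ℝ) + 1)⁻¹ := by
  have h := congrFun (stoneCechExtend_extends (continuous_of_discreteTopology (f := ufn x))) n
  exact congrArg Subtype.val h

lemma Ux_mem (x : ℕ → Bool) (z : StoneCech ℕ) :
    Ux x z ∈ closure (Set.range fun n : ℕ => ((Ffn x (e n) : ℝ) + 1)⁻¹) := by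
  have hz : z ∈ closure (Set.range (stoneCechUnit : ℕ → StoneCech ℕ)) :=
    denseRange_stoneCechUnit z
  have himg := image_closure_subset_closure_image (f := Ux x)
    (s := Set.range (stoneCechUnit : ℕ → StoneCech ℕ)) (continuous_Ux x)
  have h2 : Ux x z ∈ closure (Ux x '' Set.range (stoneCechUnit : ℕ → StoneCech ℕ)) :=
    himg ⟨z, hz, rfl⟩
  rw [← Set.range_comp] at h2
  have heq : (Ux x ∘ (stoneCechUnit : ℕ → StoneCech ℕ))
      = fun n : ℕ => ((Ffn x (e n) : ℝ) + 1)⁻¹ := funext fun n => Ux_unit x n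
  rwa [heq] at h2

/-- points in the closure of a set of reciprocals -/
lemma closure_val {S : Set ℝ} (hS : S ⊆ Set.range (fun m : ℕ => ((m : ℝ) + 1)⁻¹)) {v : ℝ}
    (hv : v ∈ closure S) : v = 0 ∨ ∃ m : ℕ, v = ((m : ℝ) + 1)⁻¹ := by
  by_contra hcon
  push_neg at hcon
  obtain ⟨hv0, hvm⟩ := hcon
  have hIcc : v ∈ Set.Icc (0:ℝ) 1 := by
    refine closure_minimal ?_ isClosed_Icc hv
    rintro w hw
    obtain ⟨m, rfl⟩ := hS hw
    exact cval_aux m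
  have hvpos : 0 < v := lt_of_le_of_ne hIcc.1 (Ne.symm hv0)
  have hsplit : S = (S ∩ Set.Ici (v/2)) ∪ (S ∩ Set.Iio (v/2)) := by
    ext w; constructor
    · intro hw
      rcases le_or_gt (v/2) w with h | h
      · exact Or.inl ⟨hw, h⟩
      · exact Or.inr ⟨hw, h⟩
    · rintro (⟨hw, -⟩ | ⟨hw, -⟩) <;> exact hw
  rw [hsplit, closure_union] at hv
  rcases hv with hv | hv
  · have hfin : (S ∩ Set.Ici (v/2)).Finite := by
      apply Set.Finite.subset (Set.Finite.image (fun m : ℕ => ((m : ℝ) + 1)⁻¹)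
        (Set.finite_Iic (Nat.ceil (2 / v))))
      rintro w ⟨hw, hw2⟩
      obtain ⟨m, rfl⟩ := hS hw
      refine ⟨m, ?_, rfl⟩
      rw [Set.mem_Iic]
      have h1 : (0:ℝ) < (m:ℝ) + 1 := by positivity
      have h2 : (m:ℝ) + 1 ≤ 2 / v := by
        rw [le_div_iff₀ hvpos]
        rw [Set.mem_Ici] at hw2
        have h3 : v / 2 * ((m:ℝ)+1) ≤ ((m:ℝ)+1)⁻¹ * ((m:ℝ)+1) :=
          mul_le_mul_of_nonneg_right hw2 (by positivity)
        rw [inv_mul_cancel₀ (ne_of_gt h1)] at h3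
        nlinarith
      have : (m : ℝ) ≤ 2 / v := by linarith
      calc (m:ℕ) ≤ Nat.ceil ((m:ℝ)) := by simp
      _ ≤ Nat.ceil (2/v) := Nat.ceil_le_ceil (by exact_mod_cast this)
    rw [hfin.isClosed.closure_eq] at hv
    obtain ⟨m, rfl⟩ := hS hv.1
    exact hvm m rfl
  · have : v ∈ Set.Iic (v/2) :=
      closure_minimal (fun w hw => le_of_lt hw.2) isClosed_Iic hv
    rw [Set.mem_Iic] at this
    linarith

lemma Ux_val (x : ℕ → Bool) (z : StoneCech ℕ) :
    Ux x z = 0 ∨ ∃ m : ℕ, Ux x z = ((m : ℝ) + 1)⁻¹ := by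
  apply closure_val (S := Set.range fun n : ℕ => ((Ffn x (e n) : ℝ) + 1)⁻¹)
  · rintro w ⟨n, rfl⟩
    exact ⟨Ffn x (e n), rfl⟩
  · exact Ux_mem x z

/-! ### Ultrafilters and points of the remainder -/

/-- an ultrafilter containing a FIP family and all cofinite sets -/
lemma exists_ultra (A : ℕ → Set ℕ) (h : ∀ k, {n | ∀ i ≤ k, n ∈ A i}.Infinite) :
    ∃ p : Ultrafilter ℕ, (∀ i, A i ∈ p) ∧ ∀ n : ℕ, ({n}ᶜ : Set ℕ) ∈ p := by
  set D : ℕ → Set ℕ := fun k => {n | ∀ i ≤ k, n ∈ A i} ∩ {n | k < n} with hD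
  have hmono : ∀ {k l : ℕ}, k ≤ l → D l ⊆ D k := fun {k l} hkl n hn =>
    ⟨fun i hi => hn.1 i (le_trans hi hkl), lt_of_le_of_lt hkl hn.2⟩
  have hne : ∀ k, (D k).Nonempty := by
    intro k
    obtain ⟨n, hn1, hn2⟩ := ((h k).diff (Set.finite_Iic k)).nonempty
    exact ⟨n, hn1, by simpa using hn2⟩
  have hdir : Directed (· ≥ ·) fun k => (𝓟 (D k) : Filter ℕ) := fun k l =>
    ⟨max k l, principal_mono.mpr (hmono (le_max_left k l)),
      principal_mono.mpr (hmono (le_max_right k l))⟩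
  haveI hF : NeBot (⨅ k, (𝓟 (D k) : Filter ℕ)) :=
    iInf_neBot_of_directed hdir fun k => principal_neBot_iff.mpr (hne k)
  set p := Ultrafilter.of (⨅ k, (𝓟 (D k) : Filter ℕ)) with hp
  have hle : (p : Filter ℕ) ≤ ⨅ k, (𝓟 (D k) : Filter ℕ) := Ultrafilter.of_le _
  have hDp : ∀ k, D k ∈ p := fun k => hle (mem_iInf_of_mem k (mem_principal_self _))
  refine ⟨p, fun i => Filter.mem_of_superset (hDp i) (fun n hn => hn.1 i le_rfl), fun n =>
    Filter.mem_of_superset (hDp n) (fun m hm => ?_)⟩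
  simp only [Set.mem_compl_iff, Set.mem_singleton_iff]
  intro hmn; rw [hmn] at hm; exact lt_irrefl n hm.2

/-- a point of the Stone–Čech remainder realizing prescribed limit values -/
lemma exists_point (p : Ultrafilter ℕ) (hp : ∀ n : ℕ, ({n}ᶜ : Set ℕ) ∈ p) :
    ∃ z : StoneCech ℕ, z ∉ Set.range (stoneCechUnit : ℕ → StoneCech ℕ) ∧
      ∀ (v : ℕ → Set.Icc (0:ℝ) 1) (c : Set.Icc (0:ℝ) 1), {n | v n = c} ∈ p →
        stoneCechExtend (continuous_of_discreteTopology (f := v)) z = c := by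
  obtain ⟨z, -, hz⟩ := isCompact_univ.ultrafilter_le_nhds (p.map stoneCechUnit)
    (by simp [le_principal_iff])
  have heval : ∀ (v : ℕ → Set.Icc (0:ℝ) 1) (c : Set.Icc (0:ℝ) 1), {n | v n = c} ∈ p →
      stoneCechExtend (continuous_of_discreteTopology (f := v)) z = c := by
    intro v c hvc
    have hcont : Continuous (stoneCechExtend (continuous_of_discreteTopology (f := v))) :=
      continuous_stoneCechExtend _
    have h1 : Tendsto (stoneCechExtend (continuous_of_discreteTopology (f := v)))
        (↑(p.map stoneCechUnit)) (nhds (stoneCechExtend _ z)) :=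
      (hcont.tendsto z).mono_left hz
    have h2 : Tendsto (stoneCechExtend (continuous_of_discreteTopology (f := v)) ∘ stoneCechUnit)
        (↑p) (nhds (stoneCechExtend (continuous_of_discreteTopology (f := v)) z)) := by
      rwa [Ultrafilter.coe_map, Filter.tendsto_map'_iff] at h1
    rw [stoneCechExtend_extends] at h2
    have h3 : Tendsto v (↑p) (nhds c) :=
      Tendsto.congr' (by filter_upwards [hvc] with n hn using hn.symm) tendsto_const_nhds
    exact tendsto_nhds_unique h2 h3
  refine ⟨z, ?_, heval⟩
  rintro ⟨k, rfl⟩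
  set v : ℕ → Set.Icc (0:ℝ) 1 := fun n => if n = k then ⟨1, by norm_num⟩ else ⟨0, by norm_num⟩
    with hv
  have hmem : {n | v n = ⟨0, by norm_num⟩} ∈ p :=
    Filter.mem_of_superset (hp k) (fun n hn => by
      simp only [Set.mem_setOf_eq, hv]
      rw [if_neg (by simpa using hn)])
  have h0 := heval v ⟨0, by norm_num⟩ hmem
  have h1 : stoneCechExtend (continuous_of_discreteTopology (f := v)) (stoneCechUnit k)
      = v k := congrFun (stoneCechExtend_extends _) k
  rw [h0] at h1
  have : (0:ℝ) = 1 := by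
    have := congrArg Subtype.val h1
    simp only [hv] at this
    simp at this
  norm_num at this

end NStarAux
end

/-- `ℕ*` admits a family of `ℵ₁` many zero-sets whose union is `ℕ*` such that no countable
subfamily has union `ℕ*`. -/
theorem NStar_cover_by_zero_sets_no_countable_subcover :
    ∃ Z : Omega1Index → Set NStar,
      (∀ α, ∃ g : C(NStar, ℝ), Z α = g ⁻¹' {0}) ∧ (⋃ α, Z α) = Set.univ ∧
      ¬ ∃ C : Set Omega1Index, C.Countable ∧ (⋃ α ∈ C, Z α) = Set.univ := by
  classical
  open NStarAux in
  obtain ⟨xh⟩ := NStarAux.exists_embed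
  obtain ⟨e₂⟩ := NStarAux.exists_pair
  set φ : Omega1Index → NStar → ℝ := fun α z => NStarAux.Ux (xh α) ↑z with hφ
  have hφcont : ∀ α, Continuous (φ α) := fun α =>
    (NStarAux.continuous_Ux _).comp continuous_subtype_val
  set g : Omega1Index → NStar → ℝ := fun γ z =>
    if (e₂ γ).1 = (e₂ γ).2 then φ (e₂ γ).1 z
    else φ (e₂ γ).1 z * (φ (e₂ γ).1 z - φ (e₂ γ).2 z) with hg
  have hgcont : ∀ γ, Continuous (g γ) := by
    intro γ
    by_cases h : (e₂ γ).1 = (e₂ γ).2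
    · simp only [hg, if_pos h]
      exact hφcont _
    · simp only [hg, if_neg h]
      exact (hφcont _).mul ((hφcont _).sub (hφcont _))
  refine ⟨fun γ => g γ ⁻¹' {0}, fun γ => ⟨⟨g γ, hgcont γ⟩, rfl⟩, ?_, ?_⟩
  · -- the family covers
    rw [Set.eq_univ_iff_forall]
    intro z
    rw [Set.mem_iUnion]
    by_contra hcon
    push_neg at hcon
    have hzero : ∀ γ, g γ z ≠ 0 := by
      intro γ h
      exact hcon γ (by simpa using h)
    have hdiag : ∀ α, φ α z ≠ 0 := by
      intro α
      have h := hzero (e₂.symm (α, α))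
      simp only [hg, Equiv.apply_symm_apply] at h
      rwa [if_true] at h
    have hdist : ∀ α β, α ≠ β → φ α z ≠ φ β z := by
      intro α β hne heq
      have h := hzero (e₂.symm (α, β))
      simp only [hg, Equiv.apply_symm_apply] at h
      rw [if_neg hne] at h
      apply h
      rw [sub_eq_zero.mpr heq, mul_zero]
    have hval : ∀ α, ∃ m : ℕ, φ α z = ((m : ℝ) + 1)⁻¹ := by
      intro α
      rcases NStarAux.Ux_val (xh α) ↑z with h0 | h
      · exact absurd h0 (hdiag α)
      · exact h
    have hminj : Function.Injective (fun α => (hval α).choose) := by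
      intro α β h
      by_contra hne
      apply hdist α β hne
      rw [(hval α).choose_spec, (hval β).choose_spec]
      simp only at h
      rw [h]
    exact NStarAux.not_countable_omega1 ⟨⟨_, hminj⟩⟩
  · -- no countable subfamily covers
    rintro ⟨C, hC, hU⟩
    set T : Set Omega1Index := ((fun γ => (e₂ γ).1) '' C) ∪ ((fun γ => (e₂ γ).2) '' C) with hT
    have hTc : T.Countable := (hC.image _).union (hC.image _)
    haveI := hTc.to_subtype
    obtain ⟨ι, hι⟩ := Countable.exists_injective_nat T
    set m' : (ℕ → Bool) → ℕ := fun w => if h : ∃ t : T, w = xh ↑t then ι h.choose else 0 with hm'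
    have hm'el : ∀ t : T, m' (xh ↑t) = ι t := by
      intro t
      have hx : ∃ t' : T, xh (↑t : Omega1Index) = xh ↑t' := ⟨t, rfl⟩
      rw [hm']
      simp only
      rw [dif_pos hx]
      have h2 : (↑hx.choose : Omega1Index) = ↑t := (xh.injective hx.choose_spec).symm
      have h3 : hx.choose = t := Subtype.ext h2
      rw [h3]
    have hNS : ∃ z : StoneCech ℕ, z ∉ Set.range (stoneCechUnit : ℕ → StoneCech ℕ) ∧
        ∀ t : T, NStarAux.Ux (xh ↑t) z = ((ι t : ℝ) + 1)⁻¹ := by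
      by_cases hne : Nonempty T
      · obtain ⟨q, hq⟩ := exists_surjective_nat T
        set A : ℕ → Set ℕ := fun k =>
          {n | NStarAux.Ffn (xh ↑(q k)) (NStarAux.e n) = ι (q k)} with hA
        have hinf : ∀ k, {n | ∀ i ≤ k, n ∈ A i}.Infinite := by
          intro k
          have hBB := NStarAux.indep m' ((Finset.Iic k).image fun i => xh ↑(q i))
          have hpre : ((NStarAux.e : ℕ ≃ NStarAux.BB) ⁻¹'
              {b : NStarAux.BB | ∀ w ∈ (Finset.Iic k).image fun i => xh ↑(q i),
                NStarAux.Ffn w b = m' w}).Infinite := by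
            apply hBB.preimage
            rw [NStarAux.e.surjective.range_eq]
            exact Set.subset_univ _
          apply hpre.mono
          intro n hn
          rw [Set.mem_preimage, Set.mem_setOf_eq] at hn
          intro i hi
          have hw : xh ↑(q i) ∈ (Finset.Iic k).image fun i => xh ↑(q i) :=
            Finset.mem_image_of_mem _ (Finset.mem_Iic.mpr hi)
          have h5 := hn _ hw
          rw [hA]
          simp only [Set.mem_setOf_eq]
          rw [h5, hm'el]
        obtain ⟨p, hpA, hpcof⟩ := NStarAux.exists_ultra A hinf
        obtain ⟨z, hz1, hz2⟩ := NStarAux.exists_point p hpcof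
        refine ⟨z, hz1, ?_⟩
        intro t
        obtain ⟨k, rfl⟩ := hq t
        have hsub : A k ⊆ {n | NStarAux.ufn (xh ↑(q k)) n = NStarAux.cval (ι (q k))} := by
          intro n hn
          rw [hA] at hn
          simp only [Set.mem_setOf_eq] at hn ⊢
          rw [NStarAux.ufn, hn]
        have hc : {n | NStarAux.ufn (xh ↑(q k)) n = NStarAux.cval (ι (q k))} ∈ p :=
          Filter.mem_of_superset (hpA k) hsub
        have h6 := hz2 (NStarAux.ufn (xh ↑(q k))) (NStarAux.cval (ι (q k))) hc
        exact congrArg Subtype.val h6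
      · obtain ⟨p, hpA, hpcof⟩ := NStarAux.exists_ultra (fun _ => Set.univ)
          (by
            intro k
            have : {n : ℕ | ∀ i ≤ k, n ∈ (Set.univ : Set ℕ)} = Set.univ := by
              ext n; simp
            rw [this]
            exact Set.infinite_univ)
        obtain ⟨z, hz1, -⟩ := NStarAux.exists_point p hpcof
        exact ⟨z, hz1, fun t => absurd ⟨t⟩ hne⟩
    obtain ⟨z, hz1, hzval⟩ := hNS
    set zz : NStar := ⟨z, hz1⟩ with hzz
    have hmem : zz ∈ ⋃ γ ∈ C, g γ ⁻¹' {0} := by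
      rw [hU]; exact Set.mem_univ zz
    rw [Set.mem_iUnion₂] at hmem
    obtain ⟨γ, hγC, hγ⟩ := hmem
    have hα : (e₂ γ).1 ∈ T := Or.inl ⟨γ, hγC, rfl⟩
    have hβ : (e₂ γ).2 ∈ T := Or.inr ⟨γ, hγC, rfl⟩
    have hvα : φ (e₂ γ).1 zz = ((ι ⟨(e₂ γ).1, hα⟩ : ℝ) + 1)⁻¹ := hzval ⟨(e₂ γ).1, hα⟩
    have hvβ : φ (e₂ γ).2 zz = ((ι ⟨(e₂ γ).2, hβ⟩ : ℝ) + 1)⁻¹ := hzval ⟨(e₂ γ).2, hβ⟩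
    have h0 : g γ zz = 0 := by simpa using hγ
    rw [hg] at h0
    simp only at h0
    have hpos : (0:ℝ) < ((ι ⟨(e₂ γ).1, hα⟩ : ℝ) + 1)⁻¹ := by positivity
    by_cases hcase : (e₂ γ).1 = (e₂ γ).2
    · rw [if_pos hcase, hvα] at h0
      exact hpos.ne' h0
    · rw [if_neg hcase] at h0
      rcases mul_eq_zero.mp h0 with h1 | h1
      · rw [hvα] at h1
        exact hpos.ne' h1
      · rw [sub_eq_zero, hvα, hvβ] at h1
        have h7 : ((ι ⟨(e₂ γ).1, hα⟩ : ℝ) + 1) = ((ι ⟨(e₂ γ).2, hβ⟩ : ℝ) + 1) :=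
          inv_inj.mp h1
        have h8 : ι ⟨(e₂ γ).1, hα⟩ + 1 = ι ⟨(e₂ γ).2, hβ⟩ + 1 := by exact_mod_cast h7
        have h9 := hι (by omega : ι ⟨(e₂ γ).1, hα⟩ = ι ⟨(e₂ γ).2, hβ⟩)
        exact hcase (congrArg Subtype.val h9)
end

section
/- There exists a closed (hence compact) subset X of the Cantor cube {0,1}^ι, where ι is an index type of cardinality ℵ₁, such that every point x of X has countable support (the set {i : x i = 1} is countable), and X admits a family of ℵ₁ many closed Gδ subsets whose union is X such that no countable subfamily has union X. -/
/-! Index the cube by `ω₁ × ℚ`. Let `X` consist of the points whose support is the graph of a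
strictly decreasing partial function `ω₁ → ℚ`. This condition only involves pairs of
coordinates, so `X` is closed, and such a support injects into `ℚ`, so it is countable. Let
`Z α` consist of the points of `X` vanishing on the column `{α} × ℚ`, a countable intersection
of clopen sets. A countable support meets only countably many columns, so the `Z α` cover `X`.
But a countable `C ⊆ ω₁` embeds order-reversingly into `ℚ`, and the graph of such an embedding
is the support of a point of `X` outside every `Z α` with `α ∈ C`. -/

open Set Ordinal

section CantorCube

variable {ι κ Y : Type*}

theorem isClosed_setOf_isChain_support (R : ι → ι → Prop) :
    IsClosed {x : ι → Bool | IsChain R {i | x i = true}} := by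
  have h : {x : ι → Bool | IsChain R {i | x i = true}} = ⋂ (i) (j),
      (fun x : ι → Bool ↦ (x i, x j)) ⁻¹'
        {b | b.1 = true → b.2 = true → i ≠ j → R i j ∨ R j i} := by
    ext x
    simp only [mem_ofPred_eq, mem_iInter, mem_preimage]
    exact ⟨fun h i j hi hj ↦ h hi hj, fun h i hi j hj ↦ h i j hi hj⟩
  rw [h]
  exact isClosed_iInter fun i ↦ isClosed_iInter fun j ↦
    (isClosed_discrete _).preimage ((continuous_apply i).prodMk (continuous_apply j))

theorem setOf_forall_apply_eq_eq_iInter (f : κ → ι) (b : Y) :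
    {x : ι → Y | ∀ k, x (f k) = b} = ⋂ k, (fun x : ι → Y ↦ x (f k)) ⁻¹' {b} := by
  ext; simp

variable [TopologicalSpace Y] [DiscreteTopology Y]

theorem isClosed_setOf_forall_apply_eq (f : κ → ι) (b : Y) :
    IsClosed {x : ι → Y | ∀ k, x (f k) = b} := by
  rw [setOf_forall_apply_eq_eq_iInter]
  exact isClosed_iInter fun k ↦ (isClosed_discrete _).preimage (continuous_apply (f k))

theorem isGδ_setOf_forall_apply_eq [Countable κ] (f : κ → ι) (b : Y) :
    IsGδ {x : ι → Y | ∀ k, x (f k) = b} := by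
  rw [setOf_forall_apply_eq_eq_iInter]
  exact .iInter_of_isOpen fun k ↦ (isOpen_discrete _).preimage (continuous_apply (f k))

end CantorCube

namespace PseudoAronszajn

variable {ι A Q : Type*} [LinearOrder A] [LinearOrder Q]

/-- Chains of `LeftAbove e` are the sets whose image under `e` is the graph of a strictly
decreasing partial function `A → Q`. -/
def LeftAbove (e : ι → A × Q) (i j : ι) : Prop :=
  (e i).1 < (e j).1 ∧ (e j).2 < (e i).2

theorem countable_of_isChain_leftAbove [Countable Q] {e : ι → A × Q} {s : Set ι}
    (hs : IsChain (LeftAbove e) s) : s.Countable := by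
  have hinj : InjOn (fun i ↦ (e i).2) s := fun i hi j hj hij ↦ by
    by_contra hne
    rcases hs hi hj hne with h | h <;> exact h.2.ne (by simp_all)
  exact (mapsTo_univ _ s).countable_of_injOn hinj countable_univ

theorem exists_isChain_leftAbove [DenselyOrdered Q] [Nontrivial Q] (e : ι ≃ A × Q) {C : Set A}
    (hC : C.Countable) :
    ∃ s : Set ι, IsChain (LeftAbove e) s ∧ ∀ a ∈ C, ∃ q, e.symm (a, q) ∈ s := by
  have := hC.to_subtype
  obtain ⟨g⟩ := Order.embedding_from_countable_to_dense (α := C) (β := Qᵒᵈ)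
  refine ⟨range fun c : C ↦ e.symm (c, OrderDual.ofDual (g c)), ?_, fun a ha ↦ ⟨_, ⟨a, ha⟩, rfl⟩⟩
  rintro _ ⟨c, rfl⟩ _ ⟨c', rfl⟩ hne
  rcases lt_or_gt_of_ne (by rintro rfl; exact hne rfl : c ≠ c') with h | h
  · exact .inl ⟨by simpa using h, by simpa using g.strictMono h⟩
  · exact .inr ⟨by simpa using h, by simpa using g.strictMono h⟩

theorem exists_forall_notMem_of_isChain_leftAbove [Uncountable A] [Countable Q] (e : ι ≃ A × Q)
    {s : Set ι} (hs : IsChain (LeftAbove e) s) : ∃ a, ∀ q, e.symm (a, q) ∉ s := by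
  have hcount : ((fun i ↦ (e i).1) '' s).Countable := (countable_of_isChain_leftAbove hs).image _
  obtain ⟨a, ha⟩ : ∃ a, a ∉ (fun i ↦ (e i).1) '' s := by
    by_contra! h
    exact not_countable_univ (hcount.mono fun a _ ↦ h a)
  exact ⟨a, fun q hq ↦ ha ⟨_, hq, by simp⟩⟩

def chainSpace (e : ι ≃ A × Q) : Set (ι → Bool) :=
  {x | IsChain (LeftAbove e) {i | x i = true}}

def zeroColumn (e : ι ≃ A × Q) (a : A) : Set (chainSpace e) :=
  {x | ∀ q, (x : ι → Bool) (e.symm (a, q)) = false}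

theorem isClosed_zeroColumn (e : ι ≃ A × Q) (a : A) : IsClosed (zeroColumn e a) :=
  (isClosed_setOf_forall_apply_eq _ false).preimage continuous_subtype_val

theorem isGδ_zeroColumn [Countable Q] (e : ι ≃ A × Q) (a : A) : IsGδ (zeroColumn e a) :=
  (isGδ_setOf_forall_apply_eq _ false).preimage continuous_subtype_val

theorem iUnion_zeroColumn [Uncountable A] [Countable Q] (e : ι ≃ A × Q) :
    ⋃ a, zeroColumn e a = Set.univ := by
  refine eq_univ_of_forall fun x ↦ mem_iUnion.2 ?_
  obtain ⟨a, ha⟩ := exists_forall_notMem_of_isChain_leftAbove e x.2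
  exact ⟨a, fun q ↦ by simpa using ha q⟩

theorem biUnion_zeroColumn_ne_univ [DenselyOrdered Q] [Nontrivial Q] (e : ι ≃ A × Q) {C : Set A}
    (hC : C.Countable) : ⋃ a ∈ C, zeroColumn e a ≠ Set.univ := by
  classical
  obtain ⟨s, hs, hsC⟩ := exists_isChain_leftAbove e hC
  have hx : (fun i ↦ decide (i ∈ s)) ∈ chainSpace e := by simpa [chainSpace] using hs
  refine ne_univ_iff_exists_notMem _ |>.2 ⟨⟨_, hx⟩, ?_⟩
  simp only [mem_iUnion, not_exists]
  intro a ha hzero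
  obtain ⟨q, hq⟩ := hsC a ha
  simpa [hq] using hzero q

end PseudoAronszajn

open Cardinal in
lemma nonempty_equiv_prod_of_countable (α β : Type*) [Infinite α] [Countable β] [Nonempty β] :
    Nonempty (α ≃ α × β) := by
  rw [← lift_mk_eq', mk_prod, Cardinal.lift_mul, Cardinal.lift_lift, Cardinal.lift_lift]
  symm
  apply Cardinal.mul_eq_left
  · simp
  · exact (lift_le_aleph0.2 mk_le_aleph0).trans (by simp)
  · simp

instance : Uncountable Omega1Index := by
  rw [← Cardinal.aleph0_lt_mk_iff]
  change Cardinal.aleph0 < Cardinal.mk (Iio (ω_ 1 : Ordinal.{0}))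
  simp

open PseudoAronszajn

/-- There is a closed (hence compact) subset `X` of the Cantor cube `{0,1}^{ω₁}` all of
whose points have countable support (so `X` is Corson compact), together with a family of
`ℵ₁` many closed `Gδ` subsets of `X` whose union is `X` such that no countable subfamily
has union `X`. -/
theorem exists_Corson_pseudoAronszajn :
    ∃ X : Set (Omega1Index → Bool),
      IsClosed X ∧
      (∀ x ∈ X, {i : Omega1Index | x i = true}.Countable) ∧
      ∃ Z : Omega1Index → Set X,
        (∀ α, IsClosed (Z α)) ∧ (∀ α, IsGδ (Z α)) ∧ (⋃ α, Z α) = Set.univ ∧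
        ¬ ∃ C : Set Omega1Index, C.Countable ∧ (⋃ α ∈ C, Z α) = Set.univ := by
  obtain ⟨e⟩ := nonempty_equiv_prod_of_countable Omega1Index ℚ
  exact ⟨chainSpace e, isClosed_setOf_isChain_support _, fun _ ↦ countable_of_isChain_leftAbove,
    zeroColumn e, isClosed_zeroColumn e, isGδ_zeroColumn e, iUnion_zeroColumn e,
    fun ⟨_, hC, hcover⟩ ↦ biUnion_zeroColumn_ne_univ e hC hcover⟩
end

section
/- Let ι = {o : Ordinal // o < ω₁}, let I_α = [ω·α, ω·(α+1)) for α < ω₁, let f : ι → ℝ be injective with f[I_α] dense in ℝ for all α < ω₁, and let X be the set of all x ∈ {0,1}^ι such that f is strictly increasing on {β : x β = 1}. For α < ω₁ put G_α = {x ∈ X : x β = 0 for all β ∈ I_α}. Then each G_α is a closed Gδ subset of X, the union of the G_α (α < ω₁) is X, and for any two disjoint countable sets A, B of ordinals below ω₁ the set (⋂_{α ∈ A} G_α) \ (⋃_{β ∈ B} G_β) is nonempty; in particular no countable subfamily of {G_α : α < ω₁} has union X. -/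
/-! A point of `X` has countable support, because a well-ordered subset of `ℝ` is countable; the
support is therefore bounded below `ω₁` and misses a whole block. Conversely, for countable `B`
the density of each `f '' I_β` lets one pick a point of every block `I_β`, `β ∈ B`, with
`f`-values increasing along `B`; the indicator of the chosen points meets no block `I_α` with
`α ∉ B`, and meets every `I_β` with `β ∈ B`. -/

open Set Ordinal

/-- The block `I_α = [ω·α, ω·(α+1))` of countable ordinals. -/
def block (α : Omega1Index) : Set Omega1Index :=
  {β : Omega1Index | Ordinal.omega0 * α.val ≤ β.val ∧ β.val < Ordinal.omega0 * (α.val + 1)}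

/-- The set of points of the Cantor cube `{0,1}^{ω₁}` on whose support `f` is strictly
increasing. -/
def incSupport (f : Omega1Index → ℝ) : Set (Omega1Index → Bool) :=
  {x : Omega1Index → Bool |
    ∀ β γ : Omega1Index, x β = true → x γ = true → β.val < γ.val → f β < f γ}

/-- The set `G_α` of points of `X` whose support avoids the block `I_α`. -/
def avoidBlock (f : Omega1Index → ℝ) (α : Omega1Index) : Set (incSupport f) :=
  {x : incSupport f | ∀ β ∈ block α, x.val β = false}

section OrderEmbeddings

variable {α β : Type*} [LinearOrder α] [LinearOrder β] [TopologicalSpace β] [OrderTopology β]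

theorem StrictMono.countable_of_wellFoundedLT [WellFoundedLT α] [SecondCountableTopology β]
    {f : α → β} (hf : StrictMono f) : Countable α := by
  -- a non-maximal point `x` has an immediate successor `m`, and `(f x, f m)` misses the range of `f`
  have hcover : (univ : Set α) ⊆ {x | ∃ z, f x < z ∧ ∀ y, x < y → z ≤ f y} ∪ {x | IsMax x} := by
    intro x _
    by_cases hx : IsMax x
    · exact Or.inr hx
    · obtain ⟨y, hxy⟩ := not_isMax_iff.1 hx
      obtain ⟨m, hxm, hmin⟩ := wellFounded_lt.has_min {y | x < y} ⟨y, hxy⟩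
      exact Or.inl ⟨f m, hf hxm, fun w hw => hf.monotone (not_lt.1 (hmin w hw))⟩
  have hmax : {x : α | IsMax x}.Subsingleton := fun a ha b hb =>
    (le_total a b).elim (fun h => le_antisymm h (ha h)) (fun h => le_antisymm (hb h) h)
  exact countable_univ_iff.1
    (((countable_image_lt_image_Ioi f).union hmax.countable).mono hcover)

theorem StrictMonoOn.countable_of_wellFoundedLT [WellFoundedLT α] [SecondCountableTopology β]
    {f : α → β} {s : Set α} (hf : StrictMonoOn f s) : s.Countable :=
  countable_coe_iff.1 (strictMonoOn_iff_strictMono.1 hf).countable_of_wellFoundedLT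

theorem exists_strictMono_forall_mem_of_dense {ι : Type*} [LinearOrder ι] [Countable ι]
    [DenselyOrdered β] [Nontrivial β] {S : ι → Set β} (hS : ∀ i, Dense (S i)) :
    ∃ y : ι → β, StrictMono y ∧ ∀ i, y i ∈ S i := by
  have : Countable (ι ×ₗ Bool) := inferInstanceAs (Countable (ι × Bool))
  -- the intervals `(e (i, false), e (i, true))` are disjoint and ordered like `ι`
  obtain ⟨e⟩ := Order.embedding_from_countable_to_dense (ι ×ₗ Bool) β
  have hsep : ∀ i, ∃ y ∈ S i, y ∈ Ioo (e (toLex (i, false))) (e (toLex (i, true))) := fun i =>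
    (hS i).exists_mem_open isOpen_Ioo
      (nonempty_Ioo.2 (e.strictMono (Prod.Lex.lt_iff.2 (Or.inr ⟨rfl, Bool.false_lt_true⟩))))
  choose y hyS hyI using hsep
  refine ⟨y, fun i j hij => ?_, hyS⟩
  calc y i < e (toLex (i, true)) := (hyI i).2
    _ < e (toLex (j, false)) := e.strictMono (Prod.Lex.lt_iff.2 (Or.inl hij))
    _ < y j := (hyI j).1

end OrderEmbeddings

section Blocks

variable {α α' β γ : Omega1Index}

theorem lt_of_mem_block_of_lt (h : α < α') (hβ : β ∈ block α) (hγ : γ ∈ block α') : β < γ :=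
  show β.val < γ.val from
    hβ.2.trans_le ((mul_le_mul_right (Order.add_one_le_of_lt (show α.val < α'.val from h)) _).trans hγ.1)

theorem le_of_mem_block_of_lt (hβ : β ∈ block α) (hγ : γ ∈ block α') (h : β < γ) : α ≤ α' :=
  not_lt.1 fun h' => (lt_of_mem_block_of_lt h' hγ hβ).not_gt h

theorem disjoint_block (h : α ≠ α') : Disjoint (block α) (block α') :=
  disjoint_left.2 fun _ hα hα' => h.lt_or_gt.elim
    (fun hlt => (lt_of_mem_block_of_lt hlt hα hα').false)
    (fun hgt => (lt_of_mem_block_of_lt hgt hα' hα).false)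

theorem lt_of_lt_of_mem_block (h : β < α) (hγ : γ ∈ block α) : β < γ :=
  show β.val < γ.val from h.trans_le ((le_mul_right _ omega0_pos).trans hγ.1)

theorem exists_nat_of_mem_block (hβ : β ∈ block α) : ∃ n : ℕ, β.val = ω * α.val + n := by
  have hlt : β.val - ω * α.val < ω := by
    refine sub_lt_of_lt_add ?_ omega0_pos
    rw [← mul_add_one]
    exact hβ.2
  obtain ⟨n, hn⟩ := lt_omega0.1 hlt
  exact ⟨n, by rw [← hn, Ordinal.add_sub_cancel_of_le hβ.1]⟩

theorem block_countable (α : Omega1Index) : (block α).Countable :=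
  ((countable_range fun n : ℕ => ω * α.val + n).preimage Subtype.val_injective).mono
    fun _ hβ => (exists_nat_of_mem_block hβ).imp fun _ hn => hn.symm

end Blocks

theorem Omega1Index.exists_gt_of_countable {s : Set Omega1Index} (hs : s.Countable) :
    ∃ δ : Omega1Index, ∀ β ∈ s, β < δ := by
  have := hs.to_subtype
  have hsucc : ∀ β : s, β.1.1 + 1 < ω₁ := fun β => by
    rw [← Order.succ_eq_add_one]
    exact (Cardinal.isSuccLimit_omega 1).succ_lt β.1.2
  exact ⟨⟨⨆ β : s, β.1.1 + 1, iSup_lt_omega_one hsucc⟩, fun β hβ =>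
    (lt_add_one β.val).trans_le (Ordinal.le_iSup (fun β : s => β.1.1 + 1) ⟨β, hβ⟩)⟩

section AvoidBlock

variable {f : Omega1Index → ℝ}

theorem mem_incSupport_iff {x : Omega1Index → Bool} :
    x ∈ incSupport f ↔ StrictMonoOn f {β | x β = true} :=
  ⟨fun h β hβ γ hγ => h β γ hβ hγ, fun h _ _ hβ hγ => h hβ hγ⟩

theorem exists_mem_avoidBlock (x : incSupport f) : ∃ α, x ∈ avoidBlock f α := by
  obtain ⟨δ, hδ⟩ := Omega1Index.exists_gt_of_countable
    (mem_incSupport_iff.1 x.2).countable_of_wellFoundedLT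
  refine ⟨δ, fun γ hγ => ?_⟩
  by_contra hx
  exact (lt_of_lt_of_mem_block (hδ γ (by simpa using hx)) hγ).false

theorem avoidBlock_eq_biInter (f : Omega1Index → ℝ) (α : Omega1Index) :
    avoidBlock f α = ⋂ β ∈ block α, (fun x : incSupport f => x.val β) ⁻¹' {false} := by
  ext x
  simp [avoidBlock]

theorem isClopen_preimage_eval (β : Omega1Index) (b : Bool) :
    IsClopen ((fun x : incSupport f => x.val β) ⁻¹' {b}) :=
  (isClopen_discrete {b}).preimage ((continuous_apply β).comp continuous_subtype_val)

theorem isClosed_avoidBlock (α : Omega1Index) : IsClosed (avoidBlock f α) := by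
  rw [avoidBlock_eq_biInter]
  exact isClosed_biInter fun β _ => (isClopen_preimage_eval β false).isClosed

theorem isGδ_avoidBlock (α : Omega1Index) : IsGδ (avoidBlock f α) := by
  rw [avoidBlock_eq_biInter]
  exact IsGδ.biInter (block_countable α) fun β _ => (isClopen_preimage_eval β false).isOpen.isGδ

theorem exists_strictMonoOn_range_mem_block (hdense : ∀ α, Dense (f '' block α))
    {B : Set Omega1Index} (hB : B.Countable) :
    ∃ g : B → Omega1Index, (∀ b : B, g b ∈ block b) ∧ StrictMonoOn f (range g) := by
  have := hB.to_subtype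
  obtain ⟨y, hy, hyS⟩ := exists_strictMono_forall_mem_of_dense fun b : B => hdense b
  choose g hg hgy using hyS
  refine ⟨g, hg, ?_⟩
  rintro _ ⟨b, rfl⟩ _ ⟨b', rfl⟩ hlt
  rw [hgy, hgy]
  exact hy (lt_of_le_of_ne (le_of_mem_block_of_lt (hg b) (hg b') hlt)
    fun h => hlt.ne (congrArg g h))

theorem avoidBlock_sdiff_nonempty (hdense : ∀ α, Dense (f '' block α))
    {A B : Set Omega1Index} (hB : B.Countable) (hAB : Disjoint A B) :
    ((⋂ α ∈ A, avoidBlock f α) \ (⋃ β ∈ B, avoidBlock f β)).Nonempty := by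
  classical
  obtain ⟨g, hg, hmono⟩ := exists_strictMonoOn_range_mem_block hdense hB
  have hx : (fun γ => decide (γ ∈ range g)) ∈ incSupport f :=
    mem_incSupport_iff.2 (by simpa only [decide_eq_true_eq, ofPred_mem_eq] using hmono)
  refine ⟨⟨_, hx⟩, mem_iInter₂.2 fun α hα γ hγ => ?_, ?_⟩
  · simp only [decide_eq_false_iff_not]
    rintro ⟨b, rfl⟩
    exact disjoint_left.1 (disjoint_block (hAB.ne_of_mem hα b.2)) hγ (hg b)
  · simp only [mem_iUnion, not_exists]
    intro β hβ hmem
    simpa using hmem _ (hg (⟨β, hβ⟩ : B))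

end AvoidBlock

theorem avoidBlock_cover_properties_general
    (f : Omega1Index → ℝ)
    (hdense : ∀ α : Omega1Index, Dense (f '' block α)) :
    (∀ α, IsClosed (avoidBlock f α) ∧ IsGδ (avoidBlock f α)) ∧
    (⋃ α, avoidBlock f α) = Set.univ ∧
    (∀ A B : Set Omega1Index, A.Countable → B.Countable → Disjoint A B →
      ((⋂ α ∈ A, avoidBlock f α) \ (⋃ β ∈ B, avoidBlock f β)).Nonempty) ∧
    ¬ ∃ C : Set Omega1Index, C.Countable ∧ (⋃ α ∈ C, avoidBlock f α) = Set.univ := by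
  refine ⟨fun α => ⟨isClosed_avoidBlock α, isGδ_avoidBlock α⟩,
    iUnion_eq_univ_iff.2 exists_mem_avoidBlock,
    fun A B _ hB hAB => avoidBlock_sdiff_nonempty hdense hB hAB, ?_⟩
  rintro ⟨C, hC, hcov⟩
  obtain ⟨x, -, hx⟩ := avoidBlock_sdiff_nonempty hdense hC (empty_disjoint C)
  exact hx (hcov ▸ mem_univ x)

/-- With `f : ω₁ → ℝ` injective and mapping each block `I_α` onto a dense subset of `ℝ`,
and `X` the set of points of the Cantor cube with `f` strictly increasing on their support:
each `G_α = {x ∈ X : x↾I_α ≡ 0}` is a closed `Gδ` subset of `X`, the `G_α` cover `X`, and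
for disjoint countable sets `A`, `B` of indices the set `⋂_{α∈A} G_α \ ⋃_{β∈B} G_β` is
nonempty; in particular no countable subfamily of the `G_α` covers `X`. -/
theorem avoidBlock_cover_properties
    (f : Omega1Index → ℝ) (hf : Function.Injective f)
    (hdense : ∀ α : Omega1Index, Dense (f '' block α)) :
    (∀ α, IsClosed (avoidBlock f α) ∧ IsGδ (avoidBlock f α)) ∧
    (⋃ α, avoidBlock f α) = Set.univ ∧
    (∀ A B : Set Omega1Index, A.Countable → B.Countable → Disjoint A B →
      ((⋂ α ∈ A, avoidBlock f α) \ (⋃ β ∈ B, avoidBlock f β)).Nonempty) ∧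
    ¬ ∃ C : Set Omega1Index, C.Countable ∧ (⋃ α ∈ C, avoidBlock f α) = Set.univ :=
  avoidBlock_cover_properties_general f hdense
end

section
/- Let X be a compact Hausdorff space that is hereditarily Lindelöf (every subspace of X is Lindelöf), and let 𝒵 be a family of closed Gδ subsets of X whose union is X such that no countable subfamily of 𝒵 has union X. Then there exists a closed uncountable subspace Y of X such that for every Z ∈ 𝒵 the intersection Z ∩ Y is nowhere dense in Y (i.e. Z ∩ Y has empty interior in the subspace topology of Y). -/
open Set

/-- If `X` is compact Hausdorff and hereditarily Lindelöf, and `𝒵` is a family of closed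
`Gδ` subsets covering `X` with no countable subcover, then there is a closed uncountable
subspace `Y` of `X` in which every member of `𝒵` is nowhere dense (its trace on `Y` has
empty interior in `Y`). -/
theorem exists_closed_uncountable_nowhere_dense_traces
    (X : Type) [TopologicalSpace X] [CompactSpace X] [T2Space X]
    [HereditarilyLindelofSpace X]
    (𝒵 : Set (Set X))
    (hclosed : ∀ Z ∈ 𝒵, IsClosed Z) (hGδ : ∀ Z ∈ 𝒵, IsGδ Z)
    (hcover : ⋃₀ 𝒵 = Set.univ)
    (hnocsub : ¬ ∃ C : Set (Set X), C ⊆ 𝒵 ∧ C.Countable ∧ ⋃₀ C = Set.univ) :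
    ∃ Y : Set X, IsClosed Y ∧ ¬ Y.Countable ∧
      ∀ Z ∈ 𝒵, interior ((fun y : Y => (y : X)) ⁻¹' Z) = (∅ : Set Y) := by
  classical
  -- A set is small if it is covered by countably many members of 𝒵
  set Small : Set X → Prop := fun S => ∃ C : Set (Set X), C ⊆ 𝒵 ∧ C.Countable ∧ S ⊆ ⋃₀ C
    with hSmallDef
  -- U : union of all small open sets
  set U : Set X := ⋃ i : {V : Set X // IsOpen V ∧ Small V}, i.1 with hUdef
  have hUopen : IsOpen U := isOpen_iUnion fun i => i.2.1
  have hUsmall : Small U := by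
    obtain ⟨t, htc, htu⟩ :=
      eq_open_union_countable (fun i : {V : Set X // IsOpen V ∧ Small V} => i.1)
        (fun i => i.2.1)
    choose C hC1 hC2 hC3 using fun i : {V : Set X // IsOpen V ∧ Small V} => i.2.2
    refine ⟨⋃ i ∈ t, C i, ?_, ?_, ?_⟩
    · exact iUnion₂_subset fun i _ => hC1 i
    · exact htc.biUnion fun i _ => hC2 i
    · rw [hUdef, ← htu]
      intro x hx
      obtain ⟨i, hit, hxi⟩ := mem_iUnion₂.mp hx
      obtain ⟨Z, hZ, hxZ⟩ := hC3 i hxi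
      exact ⟨Z, mem_iUnion₂.mpr ⟨i, hit, hZ⟩, hxZ⟩
  obtain ⟨CU, hCU𝒵, hCUc, hCUcov⟩ := hUsmall
  refine ⟨Uᶜ, hUopen.isClosed_compl, ?_, ?_⟩
  · -- Uᶜ is uncountable
    intro hYc
    have hmem : ∀ y : X, y ∈ Uᶜ → ∃ Z ∈ 𝒵, y ∈ Z := by
      intro y _
      have : y ∈ ⋃₀ 𝒵 := hcover ▸ mem_univ y
      exact this
    choose! f hf1 hf2 using hmem
    apply hnocsub
    refine ⟨CU ∪ f '' Uᶜ, ?_, ?_, ?_⟩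
    · rintro Z (hZ | ⟨y, hy, rfl⟩)
      · exact hCU𝒵 hZ
      · exact hf1 y hy
    · exact hCUc.union (hYc.image f)
    · apply eq_univ_of_forall
      intro x
      by_cases hx : x ∈ Uᶜ
      · exact ⟨f x, Or.inr ⟨x, hx, rfl⟩, hf2 x hx⟩
      · obtain ⟨Z, hZ, hxZ⟩ := hCUcov (notMem_compl_iff.mp hx)
        exact ⟨Z, Or.inl hZ, hxZ⟩
  · -- traces are nowhere dense
    intro Z hZ
    rw [eq_empty_iff_forall_notMem]
    intro y hy
    obtain ⟨t, ht_sub, ht_open, hyt⟩ := mem_interior.mp hy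
    obtain ⟨V, hVopen, hVt⟩ := isOpen_induced_iff.mp ht_open
    have hVsmall : Small V := by
      refine ⟨insert Z CU, insert_subset hZ hCU𝒵, hCUc.insert Z, ?_⟩
      intro x hxV
      by_cases hxY : x ∈ Uᶜ
      · have hm : (⟨x, hxY⟩ : ↥(Uᶜ)) ∈ (fun y : ↥(Uᶜ) => (y : X)) ⁻¹' V := hxV
        rw [hVt] at hm
        exact ⟨Z, mem_insert Z CU, ht_sub hm⟩
      · obtain ⟨W, hW, hxW⟩ := hCUcov (notMem_compl_iff.mp hxY)
        exact ⟨W, mem_insert_of_mem Z hW, hxW⟩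
    have hVU : V ⊆ U := by
      rw [hUdef]
      exact subset_iUnion (fun i : {V : Set X // IsOpen V ∧ Small V} => i.1)
        ⟨V, hVopen, hVsmall⟩
    have hyV : (y : X) ∈ V := by
      have : y ∈ t := hyt
      rw [← hVt] at this
      exact this
    exact y.2 (hVU hyV)
end

section
/- Assume that no uncountable compact Hausdorff space satisfying the countable chain condition is the union of ℵ₁ many nowhere dense subsets (a consequence of MA + ¬CH). Then for every uncountable compact Hausdorff hereditarily Lindelöf space X, every family of ℵ₁ many closed Gδ subsets of X whose union is X has a countable subfamily whose union is X. -/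
open Set

/-- A space satisfies the countable chain condition if every pairwise disjoint family of
nonempty open sets is countable. -/
def CCC (X : Type) [TopologicalSpace X] : Prop :=
  ∀ S : Set (Set X), (∀ U ∈ S, IsOpen U ∧ U.Nonempty) → S.PairwiseDisjoint id → S.Countable

/-- A subtype of a hereditarily Lindelöf space is hereditarily Lindelöf. -/
lemma herLindelof_subtype {X : Type} [TopologicalSpace X] [HereditarilyLindelofSpace X]
    (m : Set X) : HereditarilyLindelofSpace ↥m := by
  constructor
  intro t _
  rw [Topology.IsEmbedding.subtypeVal.isLindelof_iff]
  exact HereditarilyLindelof_LindelofSets _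

/-- A hereditarily Lindelöf space is ccc. -/
lemma ccc_of_herLindelof (X : Type) [TopologicalSpace X] [HereditarilyLindelofSpace X] :
    CCC X := by
  intro S hS hdisj
  have hL : IsLindelof (⋃ U : S, (U : Set X)) := HereditarilyLindelof_LindelofSets _
  obtain ⟨r, hrc, hrcov⟩ := hL.elim_countable_subcover (fun U : S => (U : Set X))
    (fun U => (hS U U.2).1) subset_rfl
  have hsub : S ⊆ Subtype.val '' r := by
    intro U hU
    obtain ⟨x, hx⟩ := (hS U hU).2
    have hxU : x ∈ ⋃ U : S, (U : Set X) := mem_iUnion.mpr ⟨⟨U, hU⟩, hx⟩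
    obtain ⟨V, hVr, hxV⟩ := mem_iUnion₂.mp (hrcov hxU)
    have : U = (V : Set X) := by
      by_contra hne
      exact (hdisj hU V.2 hne).ne_of_mem hx hxV rfl
    exact this ▸ mem_image_of_mem _ hVr
  exact (hrc.image Subtype.val).mono hsub

/-- Assume (a consequence of MA + ¬CH) that no uncountable compact Hausdorff ccc space is
the union of `ℵ₁` many nowhere dense subsets.  Then in every uncountable compact Hausdorff
hereditarily Lindelöf space, every cover by `ℵ₁` many closed `Gδ` sets has a countable
subcover. -/
theorem countable_subcover_of_MA
    (ma : ∀ (X : Type) [TopologicalSpace X] [CompactSpace X] [T2Space X],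
      ¬ (Set.univ : Set X).Countable → CCC X →
      ∀ F : Omega1Index → Set X, (∀ α, IsNowhereDense (F α)) → (⋃ α, F α) ≠ Set.univ) :
    ∀ (X : Type) [TopologicalSpace X] [CompactSpace X] [T2Space X]
      [HereditarilyLindelofSpace X], ¬ (Set.univ : Set X).Countable →
      ∀ Z : Omega1Index → Set X,
        (∀ α, IsClosed (Z α)) → (∀ α, IsGδ (Z α)) → (⋃ α, Z α) = Set.univ →
        ∃ C : Set Omega1Index, C.Countable ∧ (⋃ α ∈ C, Z α) = Set.univ := by
  intro X _ _ _ _ _hXunc Z hZcl _hZGδ hZcov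
  classical
  -- the family of closed sets whose complement is covered by countably many `Z α`
  set 𝒴 : Set (Set X) :=
    {Y | IsClosed Y ∧ ∃ C : Set Omega1Index, C.Countable ∧ Yᶜ ⊆ ⋃ α ∈ C, Z α} with h𝒴
  -- Zorn: get a minimal element of 𝒴
  have hzorn : ∃ m, Minimal (· ∈ 𝒴) m := by
    apply zorn_superset
    intro c hc hchain
    rcases c.eq_empty_or_nonempty with rfl | hne
    · refine ⟨univ, ⟨isClosed_univ, ∅, countable_empty, by simp⟩, by simp⟩
    · refine ⟨⋂₀ c, ?_, fun s hs => sInter_subset_of_mem hs⟩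
      refine ⟨isClosed_sInter (fun s hs => (hc hs).1), ?_⟩
      -- the complement is a Lindelöf set covered by the open sets `Yᶜ`, `Y ∈ c`
      have hL : IsLindelof ((⋂₀ c)ᶜ) := HereditarilyLindelof_LindelofSets _
      have hcompl : (⋂₀ c)ᶜ ⊆ ⋃ Y : c, ((Y : Set X)ᶜ) := by
        intro x hx
        simp only [mem_compl_iff, mem_sInter, not_forall] at hx
        obtain ⟨Y, hYc, hxY⟩ := hx
        exact mem_iUnion.mpr ⟨⟨Y, hYc⟩, hxY⟩
      obtain ⟨r, hrc, hrcov⟩ := hL.elim_countable_subcover (fun Y : c => ((Y : Set X)ᶜ))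
        (fun Y => (hc Y.2).1.isOpen_compl) hcompl
      choose g hgc hgcov using fun Y : c => (hc Y.2).2
      refine ⟨⋃ Y ∈ r, g Y, hrc.biUnion (fun Y _ => hgc Y), ?_⟩
      intro x hx
      obtain ⟨Y, hYr, hxY⟩ := mem_iUnion₂.mp (hrcov hx)
      obtain ⟨α, hαg, hxα⟩ := mem_iUnion₂.mp (hgcov Y hxY)
      exact mem_iUnion₂.mpr ⟨α, mem_iUnion₂.mpr ⟨Y, hYr, hαg⟩, hxα⟩
  obtain ⟨m, hm𝒴, hmmin⟩ := hzorn
  -- key property from minimality: no nonempty relatively open subset of `m` lies in a `Z α`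
  have key : ∀ (α : Omega1Index) (W : Set X), IsOpen W → W ∩ m ⊆ Z α → W ∩ m = ∅ := by
    intro α W hW hWZ
    by_contra hne
    obtain ⟨x, hxW, hxm⟩ := nonempty_iff_ne_empty.mpr hne
    obtain ⟨C, hCc, hCcov⟩ := hm𝒴.2
    have hm' : (m \ W) ∈ 𝒴 := by
      refine ⟨hm𝒴.1.sdiff hW, insert α C, hCc.insert α, ?_⟩
      intro y hy
      rw [mem_compl_iff, mem_diff, not_and_or, not_not] at hy
      rcases hy with hy | hy
      · obtain ⟨β, hβC, hyβ⟩ := mem_iUnion₂.mp (hCcov hy)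
        exact mem_iUnion₂.mpr ⟨β, mem_insert_of_mem _ hβC, hyβ⟩
      · by_cases hym : y ∈ m
        · exact mem_iUnion₂.mpr ⟨α, mem_insert _ _, hWZ ⟨hy, hym⟩⟩
        · obtain ⟨β, hβC, hyβ⟩ := mem_iUnion₂.mp (hCcov hym)
          exact mem_iUnion₂.mpr ⟨β, mem_insert_of_mem _ hβC, hyβ⟩
    have := hmmin hm' diff_subset
    exact ((this hxm).2 hxW)
  -- `m` must be empty
  have hm_empty : m = ∅ := by
    by_contra hmne
    obtain ⟨x₀, hx₀⟩ := nonempty_iff_ne_empty.mpr hmne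
    -- work in the subspace M = ↥m
    haveI : Nonempty ↥m := ⟨⟨x₀, hx₀⟩⟩
    haveI : CompactSpace ↥m := isCompact_iff_compactSpace.mp (hm𝒴.1.isCompact)
    haveI : HereditarilyLindelofSpace ↥m := herLindelof_subtype m
    set F : Omega1Index → Set ↥m := fun α => (Subtype.val : ↥m → X) ⁻¹' Z α with hF
    have hFcl : ∀ α, IsClosed (F α) := fun α => (hZcl α).preimage continuous_subtype_val
    have hFint : ∀ α, interior (F α) = ∅ := by
      intro α
      by_contra hne
      obtain ⟨y, hy⟩ := nonempty_iff_ne_empty.mpr hne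
      obtain ⟨W, hWopen, hWeq⟩ := isOpen_induced_iff.mp (isOpen_interior (s := F α))
      have hWZ : W ∩ m ⊆ Z α := by
        rintro x ⟨hxW, hxm⟩
        have : (⟨x, hxm⟩ : ↥m) ∈ interior (F α) := hWeq ▸ hxW
        have h2 : (⟨x, hxm⟩ : ↥m) ∈ F α := interior_subset this
        exact h2
      have : (y : X) ∈ W ∩ m := ⟨by rw [← hWeq] at hy; exact hy, y.2⟩
      rw [key α W hWopen hWZ] at this
      exact this
    have hFnwd : ∀ α, IsNowhereDense (F α) := fun α =>
      ((hFcl α).isNowhereDense_iff).mpr (hFint α)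
    have hFcov : (⋃ α, F α) = univ := by
      apply eq_univ_of_forall
      intro y
      have : (y : X) ∈ ⋃ α, Z α := hZcov ▸ mem_univ _
      obtain ⟨α, hα⟩ := mem_iUnion.mp this
      exact mem_iUnion.mpr ⟨α, hα⟩
    by_cases hcnt : (univ : Set ↥m).Countable
    · -- countable case: contradicts Baire
      haveI : Countable ↥m := countable_univ_iff.mp hcnt
      have hcov : ⋃ y : ↥m, ({y} : Set ↥m) = univ := by
        apply eq_univ_of_forall; intro y; exact mem_iUnion.mpr ⟨y, rfl⟩
      obtain ⟨y, hy⟩ := nonempty_interior_of_iUnion_of_closed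
        (fun y : ↥m => isClosed_singleton) hcov
      obtain ⟨α, hα⟩ := mem_iUnion.mp (hFcov ▸ (mem_univ y))
      have : interior ({y} : Set ↥m) ⊆ interior (F α) :=
        interior_mono (singleton_subset_iff.mpr hα)
      rw [hFint α] at this
      exact (this hy.some_mem)
    · -- uncountable case: contradicts MA
      exact ma ↥m hcnt (ccc_of_herLindelof ↥m) F hFnwd hFcov
  obtain ⟨C, hCc, hCcov⟩ := hm𝒴.2
  refine ⟨C, hCc, ?_⟩
  apply eq_univ_of_forall
  intro x
  exact hCcov (by rw [hm_empty]; simp : x ∈ mᶜ)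
end

section
/- Assume that the Baire space ℕ → ℕ (with the product topology) is the union of a family of at most ℵ₁ many compact subsets. Then there exist a subset E of the Cantor space 2^ℕ with |E| = ℵ₁ and a family 𝒦 of compact subsets of 2^ℕ with |𝒦| ≤ ℵ₁ such that the complement 2^ℕ \ E equals the union of 𝒦. -/
/-!
Under the hypothesis every analytic subset of a Polish space, being a continuous image of the
Baire space, is a union of `ℵ₁` compact sets. Fix a countable dense set `D` in the Cantor space
and write the `Gδ` set `Dᶜ` as `⋃_{β<ω₁} L β` with `L β` compact, hence nowhere dense. By the
Baire category theorem pick `x α ∉ D ∪ ⋃_{β<α} L β`. Then `E = {x α}` meets each `L β` only in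
the countable set `{x α | α ≤ β}`, so every `L β \ E` is a `Gδ` set; and as every `x α` lies in
some `L β`, the fibres of `x` are countable and `|E| = ℵ₁`. Finally `Eᶜ = D ∪ ⋃_β (L β \ E)` is
a union of `ℵ₁` compact sets.
-/

open Set

open Cardinal Filter MeasureTheory Topology

universe u

instance Pi.perfectSpace {ι X : Type*} [Infinite ι] [Nontrivial X] [TopologicalSpace X] :
    PerfectSpace (ι → X) := by
  classical
  refine perfectSpace_iff_forall_not_isolated.2 fun x => ?_
  choose y hy using fun i => exists_ne (x i)
  have hlim : Tendsto (fun i => Function.update x i (y i)) cofinite (𝓝[≠] x) := by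
    refine tendsto_nhdsWithin_iff.2 ⟨tendsto_pi_nhds.2 fun j => ?_, ?_⟩
    · refine tendsto_const_nhds.congr' ?_
      filter_upwards [eventually_cofinite_ne j] with i hij
      exact (Function.update_of_ne (Ne.symm hij) _ _).symm
    · filter_upwards with i
      exact fun h => hy i (by simpa using congrFun h i)
  exact hlim.neBot

theorem Set.Countable.isMeagre {X : Type*} [TopologicalSpace X] [T1Space X] [PerfectSpace X]
    {s : Set X} (hs : s.Countable) : IsMeagre s := by
  rw [← biUnion_of_singleton s]
  refine isMeagre_biUnion hs fun x _ => IsNowhereDense.isMeagre ?_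
  rw [IsNowhereDense, closure_singleton, interior_singleton]

theorem IsMeagre.nonempty_compl {X : Type*} [TopologicalSpace X] [BaireSpace X] [Nonempty X]
    {s : Set X} (hs : IsMeagre s) : sᶜ.Nonempty := by
  rw [Set.nonempty_compl]
  rintro rfl
  exact not_isMeagre_of_isOpen isOpen_univ univ_nonempty hs

theorem IsGδ.analyticSet {X : Type*} [TopologicalSpace X] [PolishSpace X] {s : Set X}
    (hs : IsGδ s) : AnalyticSet s := by
  borelize X
  exact hs.measurableSet.analyticSet

theorem MeasureTheory.AnalyticSet.exists_isCompact_iUnion_eq {ι X : Type*} [TopologicalSpace X]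
    {K : ι → Set (ℕ → ℕ)} (hK : ∀ i, IsCompact (K i)) (hKU : ⋃ i, K i = Set.univ)
    {s : Set X} (hs : AnalyticSet s) :
    ∃ L : ι → Set X, (∀ i, IsCompact (L i)) ∧ ⋃ i, L i = s := by
  rw [AnalyticSet] at hs
  obtain rfl | ⟨f, hf, rfl⟩ := hs
  · exact ⟨fun _ => ∅, fun _ => isCompact_empty, iUnion_empty⟩
  · refine ⟨fun i => f '' K i, fun i => (hK i).image hf, ?_⟩
    rw [← image_iUnion, hKU, image_univ]

namespace Omega1Index

theorem mk_eq : #Omega1Index = lift.{1} (ℵ₁ : Cardinal.{0}) := by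
  rw [← Ordinal.card_omega 1]
  exact mk_Iio_ordinal _

theorem mk_range_le {α : Type u} (f : Omega1Index → α) : #(range f) ≤ ℵ₁ := by
  have := mk_range_le_lift (f := f)
  rw [mk_eq] at this
  simpa using this

instance : Uncountable Omega1Index := by
  rw [← aleph0_lt_mk_iff, mk_eq]
  simp

theorem countable_Iic (b : Omega1Index) : (Iic b).Countable := by
  have hsucc : Order.succ b.val < Ordinal.omega 1 := (isSuccLimit_omega 1).succ_lt b.2
  have : (Iio (Order.succ b.val)).Countable := by
    rw [← le_aleph0_iff_set_countable, mk_Iio_ordinal, lift_le_aleph0, ← lt_aleph_one_iff,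
      ← lt_omega_iff_card_lt]
    exact hsucc
  exact (this.preimage Subtype.val_injective).mono fun a (ha : a ≤ b) =>
    (Order.lt_succ_iff.2 ha : a.val < Order.succ b.val)

theorem countable_Iio (b : Omega1Index) : (Iio b).Countable :=
  (countable_Iic b).mono Iio_subset_Iic_self

section Ranked

variable {X : Type u} {L : Omega1Index → Set X} {x : Omega1Index → X}

theorem countable_range_inter (hx : ∀ α β, x α ∈ L β → α ≤ β) (β : Omega1Index) :
    (range x ∩ L β).Countable := by
  refine ((countable_Iic β).image x).mono ?_
  rintro _ ⟨⟨α, rfl⟩, hα⟩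
  exact mem_image_of_mem x (hx α β hα)

theorem mk_range_eq (hx : ∀ α β, x α ∈ L β → α ≤ β) (hcover : ∀ α, ∃ β, x α ∈ L β) :
    #(range x) = ℵ₁ := by
  refine (mk_range_le x).antisymm ?_
  rw [aleph_one_le_iff, ← not_le, le_aleph0_iff_set_countable]
  intro hcount
  have hfiber : ∀ y ∈ range x, (x ⁻¹' {y}).Countable := by
    rintro _ ⟨α, rfl⟩
    obtain ⟨β, hβ⟩ := hcover α
    exact (countable_Iic β).mono fun γ (hγ : x γ = x α) => hx γ β (hγ ▸ hβ)
  have hcover_univ : Set.univ ⊆ ⋃ y ∈ range x, x ⁻¹' {y} := fun α _ =>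
    mem_biUnion (mem_range_self α) (mem_singleton (x α))
  exact not_countable_univ ((hcount.biUnion hfiber).mono hcover_univ)

end Ranked

end Omega1Index

theorem exists_mk_eq_aleph_one_forall_countable_inter {X : Type u} [TopologicalSpace X]
    [BaireSpace X] [Nonempty X] {D : Set X} (hD : IsMeagre D) {L : Omega1Index → Set X}
    (hL : ∀ β, IsMeagre (L β)) (hDL : Dᶜ ⊆ ⋃ β, L β) :
    ∃ E ⊆ Dᶜ, #E = ℵ₁ ∧ ∀ β, (E ∩ L β).Countable := by
  have hmeagre : ∀ α, IsMeagre (D ∪ ⋃ β ∈ Iio α, L β) := fun α =>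
    hD.union (isMeagre_biUnion (Omega1Index.countable_Iio α) fun β _ => hL β)
  choose x hx using fun α => (hmeagre α).nonempty_compl
  have hxD : ∀ α, x α ∉ D := fun α h => hx α (Or.inl h)
  have hxL : ∀ α β, x α ∈ L β → α ≤ β := fun α β h =>
    not_lt.1 fun hβα => hx α (Or.inr (mem_biUnion hβα h))
  have hcover : ∀ α, ∃ β, x α ∈ L β := fun α => mem_iUnion.1 (hDL (hxD α))
  exact ⟨range x, range_subset_iff.2 hxD, Omega1Index.mk_range_eq hxL hcover,
    Omega1Index.countable_range_inter hxL⟩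

def IsAleph1UnionOfCompacts {X : Type u} [TopologicalSpace X] (s : Set X) : Prop :=
  ∃ 𝒦 : Set (Set X), #𝒦 ≤ ℵ₁ ∧ (∀ K ∈ 𝒦, IsCompact K) ∧ ⋃₀ 𝒦 = s

namespace IsAleph1UnionOfCompacts

variable {X : Type u} [TopologicalSpace X] {s t : Set X}

theorem of_isCompact (hs : IsCompact s) : IsAleph1UnionOfCompacts s :=
  ⟨{s}, by simpa using one_lt_aleph0.le.trans (aleph0_le_aleph 1), by simpa, sUnion_singleton s⟩

theorem sUnion {𝒮 : Set (Set X)} (h𝒮 : #𝒮 ≤ ℵ₁) (h : ∀ s ∈ 𝒮, IsAleph1UnionOfCompacts s) :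
    IsAleph1UnionOfCompacts (⋃₀ 𝒮) := by
  choose 𝒦 h𝒦card h𝒦cpt h𝒦eq using h
  refine ⟨⋃ s : 𝒮, 𝒦 s s.2, ?_, ?_, ?_⟩
  · calc #(⋃ s : 𝒮, 𝒦 s s.2) ≤ #𝒮 * ⨆ s : 𝒮, #(𝒦 s s.2) := mk_iUnion_le _
      _ ≤ ℵ₁ * ℵ₁ := mul_le_mul' h𝒮 (ciSup_le' fun s => h𝒦card s s.2)
      _ = ℵ₁ := mul_eq_self (aleph0_le_aleph 1)
  · simp only [mem_iUnion]
    rintro K ⟨s, hK⟩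
    exact h𝒦cpt s s.2 K hK
  · rw [sUnion_iUnion, sUnion_eq_iUnion]
    exact iUnion_congr fun s => h𝒦eq s s.2

theorem sUnion_of_countable {𝒮 : Set (Set X)} (h𝒮 : 𝒮.Countable)
    (h : ∀ s ∈ 𝒮, IsAleph1UnionOfCompacts s) : IsAleph1UnionOfCompacts (⋃₀ 𝒮) :=
  sUnion ((le_aleph0_iff_set_countable.2 h𝒮).trans (aleph0_le_aleph 1)) h

theorem iUnion {s : Omega1Index → Set X} (h : ∀ i, IsAleph1UnionOfCompacts (s i)) :
    IsAleph1UnionOfCompacts (⋃ i, s i) := by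
  rw [← sUnion_range]
  exact sUnion (Omega1Index.mk_range_le s) (forall_mem_range.2 h)

theorem union (hs : IsAleph1UnionOfCompacts s) (ht : IsAleph1UnionOfCompacts t) :
    IsAleph1UnionOfCompacts (s ∪ t) := by
  rw [← sUnion_pair]
  exact sUnion_of_countable (toFinite _).countable (by simp [hs, ht])

theorem of_countable [T1Space X] (hs : s.Countable) : IsAleph1UnionOfCompacts s := by
  rw [← biUnion_of_singleton s, ← sUnion_image]
  exact sUnion_of_countable (hs.image _)
    (forall_mem_image.2 fun x _ => of_isCompact isCompact_singleton)

theorem of_analyticSet {K : Omega1Index → Set (ℕ → ℕ)} (hK : ∀ i, IsCompact (K i))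
    (hKU : ⋃ i, K i = Set.univ) (hs : AnalyticSet s) : IsAleph1UnionOfCompacts s := by
  obtain ⟨L, hL, rfl⟩ := hs.exists_isCompact_iUnion_eq hK hKU
  exact iUnion fun i => of_isCompact (hL i)

end IsAleph1UnionOfCompacts

open IsAleph1UnionOfCompacts in
theorem exists_mk_eq_aleph_one_isAleph1UnionOfCompacts_compl {X : Type u} [TopologicalSpace X]
    [PolishSpace X] [PerfectSpace X] [Nonempty X] {K : Omega1Index → Set (ℕ → ℕ)}
    (hK : ∀ i, IsCompact (K i)) (hKU : ⋃ i, K i = Set.univ) :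
    ∃ E : Set X, #E = ℵ₁ ∧ IsAleph1UnionOfCompacts Eᶜ := by
  obtain ⟨D, hDc, hDd⟩ := TopologicalSpace.exists_countable_dense X
  obtain ⟨L, hLc, hLU⟩ := hDc.isGδ_compl.analyticSet.exists_isCompact_iUnion_eq hK hKU
  have hLm : ∀ β, IsMeagre (L β) := by
    have hDint : interior Dᶜ = ∅ := interior_eq_empty_iff_dense_compl.2 (by rwa [compl_compl])
    refine fun β => ((hLc β).isClosed.isNowhereDense_iff.2 ?_).isMeagre
    exact subset_eq_empty (interior_mono (hLU ▸ subset_iUnion L β)) hDint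
  obtain ⟨E, hED, hE, hEL⟩ :=
    exists_mk_eq_aleph_one_forall_countable_inter hDc.isMeagre hLm hLU.ge
  refine ⟨E, hE, ?_⟩
  have hcompl : Eᶜ = D ∪ ⋃ β, L β \ E := by
    rw [← iUnion_sdiff, hLU, sdiff_eq_compl_inter, ← sdiff_eq, union_sdiff_self,
      union_eq_right.2 (subset_compl_comm.1 hED)]
  rw [hcompl]
  refine (of_countable hDc).union (iUnion fun β => of_analyticSet hK hKU ?_)
  rw [← sdiff_inter_self_eq_sdiff]
  exact ((hLc β).isClosed.isGδ.inter (hEL β).isGδ_compl).analyticSet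

/-- If the Baire space `ℕ → ℕ` is the union of at most `ℵ₁` many compact sets (i.e.
`𝔡 = ℵ₁`), then there are a subset `E` of the Cantor space of cardinality `ℵ₁` and a
family `𝒦` of at most `ℵ₁` many compact subsets of the Cantor space whose union is the
complement of `E`. -/
theorem cantor_complement_of_d_eq_aleph_one
    (hd : ∃ K : Omega1Index → Set (ℕ → ℕ), (∀ i, IsCompact (K i)) ∧
      (⋃ i, K i) = Set.univ) :
    ∃ E : Set (ℕ → Bool), Cardinal.mk E = Cardinal.aleph 1 ∧
      ∃ 𝒦 : Set (Set (ℕ → Bool)), Cardinal.mk 𝒦 ≤ Cardinal.aleph 1 ∧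
        (∀ K ∈ 𝒦, IsCompact K) ∧ ⋃₀ 𝒦 = Eᶜ := by
  obtain ⟨K, hK, hKU⟩ := hd
  -- instance search does not assemble this from `SeparableSpace` and completeness
  have : PolishSpace (ℕ → Bool) := {}
  exact exists_mk_eq_aleph_one_isAleph1UnionOfCompacts_compl hK hKU
end

section
/- Let T be a type with a partial order such that: for every t ∈ T the set of strict predecessors {s : s < t} is linearly ordered and well-founded (so T is a tree, and each t has an ordinal level, the order type of {s : s < t}); every chain in T is countable; every level T_α = {t : the level of t is α} is countable; and T is uncountable. Let σT be the set of all P ∈ {0,1}^T that are characteristic functions of subsets of T which are both chains and lower sets (if t is in the set and s ≤ t then s is in the set), with the subspace topology from the Cantor cube {0,1}^T. Then σT is a closed (hence compact) subset of {0,1}^T; for every α < ω₁ the set K_α = {P ∈ σT : P meets no element of T_α} is a closed Gδ subset of σT; the union of the K_α over α < ω₁ is σT; and no countable subfamily of {K_α : α < ω₁} has union σT. -/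
/-!
The conditions defining `σT` and each `K_α` constrain only one or two coordinates at a time, so
these sets are closed, and `K_α` is a countable intersection of clopen sets because level `α` is
countable. A path is a chain, hence countable, so the levels it meets form a countable set of
ordinals and it misses some level `α < ω₁`. Countably many `K_α` only concern levels below some
countable ordinal; as the levels are countable and `T` is not, some node `t` lies strictly above
all of them, and the branch below `t` meets every level below that of `t`, so it lies in no such
`K_α`.
-/

open Set

/-- The level of a node `t` of a tree: the order type of its set of strict predecessors,
which is assumed (via `hwo`) to be well-ordered by the tree order. -/
noncomputable def treeLevel {T : Type} [PartialOrder T]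
    (hwo : ∀ t : T, IsWellOrder {s : T // s < t} (fun a b => a.val < b.val)) (t : T) :
    Ordinal :=
  @Ordinal.type {s : T // s < t} (fun a b => a.val < b.val) (hwo t)

/-- The path space `σT` of a tree `T`, viewed inside the Cantor cube `{0,1}^T`:
characteristic functions of subsets of `T` that are chains and lower sets. -/
def pathSpace (T : Type) [PartialOrder T] : Set (T → Bool) :=
  {P : T → Bool | IsChain (· ≤ ·) {t : T | P t = true} ∧
    ∀ s t : T, P t = true → s ≤ t → P s = true}

/-- `K_α`: the set of paths that meet no node of level `α`. -/
def pathsMissingLevel {T : Type} [PartialOrder T]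
    (hwo : ∀ t : T, IsWellOrder {s : T // s < t} (fun a b => a.val < b.val))
    (α : Omega1Index) : Set (pathSpace T) :=
  {P : pathSpace T | ∀ t : T, treeLevel hwo t = α.val → P.val t = false}

open Cardinal Ordinal

theorem Ordinal.countable_Iio_iff {o : Ordinal} : (Iio o).Countable ↔ o < ω₁ := by
  rw [← le_aleph0_iff_set_countable, Cardinal.mk_Iio_ordinal, lift_le_aleph0,
    ← lt_aleph_one_iff, ← ord_aleph, lt_ord]

theorem Ordinal.countable_Iic {o : Ordinal} (h : o < ω₁) : (Iic o).Countable := by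
  rw [← Iio_union_right]
  exact (countable_Iio_iff.2 h).union (countable_singleton o)

theorem Ordinal.exists_lt_omega_one_notMem {s : Set Ordinal} (hs : s.Countable) :
    ∃ o < ω₁, o ∉ s :=
  not_subset.1 fun hsub => (lt_irrefl ω₁) (countable_Iio_iff.1 (hs.mono hsub))

theorem isClosed_setOf_apply_apply {T : Type*} (a b : T) (p : Bool → Bool → Prop) :
    IsClosed {P : T → Bool | p (P a) (P b)} :=
  (isClosed_discrete {x : Bool × Bool | p x.1 x.2}).preimage
    (f := fun P : T → Bool => (P a, P b)) (by fun_prop)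

theorem isClopen_setOf_val_apply_eq {T : Type*} {S : Set (T → Bool)} (t : T) (b : Bool) :
    IsClopen {P : S | P.val t = b} :=
  (isClopen_discrete {b}).preimage ((continuous_apply t).comp continuous_subtype_val)

theorem isClosed_pathSpace (T : Type) [PartialOrder T] : IsClosed (pathSpace T) := by
  have hcoord : pathSpace T = ⋂ (a) (b),
      {P : T → Bool | P a = true → P b = true → a ≠ b → a ≤ b ∨ b ≤ a} ∩
        {P | P b = true → a ≤ b → P a = true} := by
    ext P
    simp only [pathSpace, IsChain, Set.Pairwise, mem_iInter, mem_inter_iff, mem_ofPred_eq,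
      forall_and]
    exact and_congr_left fun _ => ⟨fun h a b ha hb => h ha hb, fun h a ha b hb => h a b ha hb⟩
  rw [hcoord]
  exact isClosed_iInter fun a => isClosed_iInter fun b =>
    (isClosed_setOf_apply_apply a b
      fun x y => x = true → y = true → a ≠ b → a ≤ b ∨ b ≤ a).inter
        (isClosed_setOf_apply_apply b a fun y x => y = true → a ≤ b → x = true)

section Tree

variable {T : Type} [PartialOrder T]
  (hwo : ∀ t : T, IsWellOrder {s : T // s < t} (fun a b => a.val < b.val))

theorem pathsMissingLevel_eq_biInter (α : Omega1Index) :
    pathsMissingLevel hwo α =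
      ⋂ t ∈ {t : T | treeLevel hwo t = α.val}, {P : pathSpace T | P.val t = false} := by
  ext P
  simp [pathsMissingLevel]

theorem isClosed_pathsMissingLevel (α : Omega1Index) : IsClosed (pathsMissingLevel hwo α) := by
  rw [pathsMissingLevel_eq_biInter]
  exact isClosed_biInter fun t _ => (isClopen_setOf_val_apply_eq t false).isClosed

theorem isGδ_pathsMissingLevel {α : Omega1Index}
    (hα : {t : T | treeLevel hwo t = α.val}.Countable) : IsGδ (pathsMissingLevel hwo α) := by
  rw [pathsMissingLevel_eq_biInter]
  exact .biInter hα fun t _ => (isClopen_setOf_val_apply_eq t false).isOpen.isGδ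

theorem iUnion_pathsMissingLevel_eq_univ
    (hchain : ∀ c : Set T, IsChain (· ≤ ·) c → c.Countable) :
    ⋃ α : Omega1Index, pathsMissingLevel hwo α = Set.univ := by
  refine eq_univ_of_forall fun P => mem_iUnion.2 ?_
  obtain ⟨o, ho, hoP⟩ := exists_lt_omega_one_notMem <|
    (hchain _ P.2.1).image (treeLevel hwo)
  exact ⟨⟨o, ho⟩, fun t ht => Bool.not_eq_true _ ▸ fun hPt => hoP ⟨t, hPt, ht⟩⟩

theorem countable_setOf_treeLevel_le
    (hlevel : ∀ α : Ordinal, {t : T | treeLevel hwo t = α}.Countable) {o : Ordinal}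
    (ho : o < ω₁) :
    {t : T | treeLevel hwo t ≤ o}.Countable :=
  ((countable_Iic ho).biUnion fun β _ => hlevel β).mono fun t ht =>
    mem_biUnion (x := treeLevel hwo t) ht rfl

theorem treeLevel_val_eq_typein (t : T) (x : {s : T // s < t}) :
    treeLevel hwo x.val =
      @typein {s : T // s < t} (fun a b => a.val < b.val) (hwo t) x := by
  let := hwo t
  rw [← type_subrel]
  exact RelIso.ordinalType_congr ⟨⟨fun u => ⟨⟨u.val, u.prop.trans x.prop⟩, u.prop⟩,
    fun v => ⟨v.val.val, v.prop⟩, fun _ => rfl, fun _ => rfl⟩, Iff.rfl⟩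

theorem exists_lt_treeLevel_eq {t : T} {o : Ordinal} (ho : o < treeLevel hwo t) :
    ∃ s < t, treeLevel hwo s = o := by
  let := hwo t
  obtain ⟨x, hx⟩ := typein_surj (fun a b : {s : T // s < t} => a.val < b.val) ho
  exact ⟨x.val, x.prop, (treeLevel_val_eq_typein hwo t x).trans hx⟩

theorem isChain_Iic {t : T} (hwt : IsWellOrder {s : T // s < t} (fun a b => a.val < b.val)) :
    IsChain (· ≤ ·) (Iic t) := by
  intro a (hat : a ≤ t) b (hbt : b ≤ t) hab
  rcases hat.eq_or_lt with rfl | hat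
  · exact .inr hbt
  rcases hbt.eq_or_lt with rfl | hbt
  · exact .inl hat.le
  rcases trichotomous_of (fun a b : {s : T // s < t} => a.val < b.val)
    ⟨a, hat⟩ ⟨b, hbt⟩ with h | h | h
  · exact .inl h.le
  · exact absurd (congrArg Subtype.val h) hab
  · exact .inr h.le

open Classical in
noncomputable def branch (t : T) (hwt : IsWellOrder {s : T // s < t} (fun a b => a.val < b.val)) :
    pathSpace T :=
  ⟨fun s => decide (s ≤ t), by simp only [decide_eq_true_eq]; exact isChain_Iic hwt,
    fun _ _ hu hsu => by simpa using hsu.trans (by simpa using hu)⟩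

theorem branch_notMem_pathsMissingLevel {t : T} {α : Omega1Index} (h : α.val < treeLevel hwo t) :
    branch t (hwo t) ∉ pathsMissingLevel hwo α := fun hmiss => by
  obtain ⟨s, hst, hs⟩ := exists_lt_treeLevel_eq hwo h
  simpa [branch, hst.le] using hmiss s hs

end Tree

/-- For an Aronszajn tree `T` (strict predecessors of each node form a well-ordered chain,
all chains are countable, all levels are countable, `T` is uncountable), the path space
`σT` is a closed subset of the Cantor cube `{0,1}^T`, each `K_α` (paths missing level `α`)
is a closed `Gδ` subset of `σT`, the sets `K_α` for `α < ω₁` cover `σT`, and no countable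
subfamily of them covers `σT`. -/
theorem pathSpace_of_aronszajn_tree
    (T : Type) [PartialOrder T]
    (hwo : ∀ t : T, IsWellOrder {s : T // s < t} (fun a b => a.val < b.val))
    (hchain : ∀ c : Set T, IsChain (· ≤ ·) c → c.Countable)
    (hlevel : ∀ α : Ordinal, {t : T | treeLevel hwo t = α}.Countable)
    (hunc : ¬ (Set.univ : Set T).Countable) :
    IsClosed (pathSpace T) ∧
    (∀ α : Omega1Index, IsClosed (pathsMissingLevel hwo α) ∧
      IsGδ (pathsMissingLevel hwo α)) ∧
    (⋃ α : Omega1Index, pathsMissingLevel hwo α) = Set.univ ∧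
    ¬ ∃ C : Set Omega1Index, C.Countable ∧
        (⋃ α ∈ C, pathsMissingLevel hwo α) = Set.univ := by
  refine ⟨isClosed_pathSpace T,
    fun α => ⟨isClosed_pathsMissingLevel hwo α, isGδ_pathsMissingLevel hwo (hlevel α.val)⟩,
    iUnion_pathsMissingLevel_eq_univ hwo hchain, ?_⟩
  rintro ⟨C, hC, hcov⟩
  have hlow : (⋃ α ∈ C, {t : T | treeLevel hwo t ≤ α.val}).Countable :=
    hC.biUnion fun α _ => countable_setOf_treeLevel_le hwo hlevel α.2
  obtain ⟨t, -, ht⟩ := not_subset.1 fun h => hunc (hlow.mono h)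
  have hbranch : branch t (hwo t) ∈ ⋃ α ∈ C, pathsMissingLevel hwo α := hcov ▸ mem_univ _
  obtain ⟨α, hαC, hα⟩ := mem_iUnion₂.1 hbranch
  exact branch_notMem_pathsMissingLevel hwo (not_le.1 fun h => ht (mem_biUnion hαC h)) hα
end

section
/- There exists a separable compact Hausdorff space X (X has a countable dense subset) that admits a family of ℵ₁ many closed Gδ subsets whose union is X such that no countable subfamily has union X. -/
/-!
The space is `βℕ = Ultrafilter ℕ`. By transfinite recursion we build, for every `γ < ω₁`, a level
of countably many pairwise almost disjoint infinite sets `node n ⊆ ℕ` with rational labels, such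
that every node of level `γ` lies almost inside some node of each earlier level `β`, and lies almost
inside, with a larger label, every node of level `β` that it meets in an infinite set: a special
Aronszajn tree in `(𝒫 ℕ / fin, ⊇*)`. To reach a limit level, countably many `⊆*`-chains are threaded
through a cofinal sequence of earlier levels and replaced by their pseudo-intersections; this stays
possible because every node has, at each later level, infinitely many nodes almost below it with
labels in any interval just above its own.

Let `Z γ` consist of the ultrafilters containing no node of level `γ`. The labels of the nodes lying
in a free ultrafilter increase with the level, so it meets only countably many levels and lies in
some `Z γ`. Conversely, a free ultrafilter containing a node of level `δ` contains a node of every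
earlier level, so countably many `Z γ` do not cover. Principal ultrafilters are covered by adding
one of them to each `Z γ`.
-/

open Set Filter

section AlmostSubset

variable {α : Type*} {s t u : Set α}

def AlmostSubset (s t : Set α) : Prop := (s \ t).Finite

infix:50 " ⊆* " => AlmostSubset

theorem AlmostSubset.of_subset (h : s ⊆ t) : s ⊆* t := by
  simp [AlmostSubset, sdiff_eq_empty.2 h]

theorem AlmostSubset.trans (hst : s ⊆* t) (htu : t ⊆* u) : s ⊆* u :=
  (hst.union htu).subset (sdiff_triangle s t u)

theorem AlmostSubset.finite_inter (hst : s ⊆* t) (htu : (t ∩ u).Finite) : (s ∩ u).Finite :=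
  (hst.union htu).subset fun x ⟨hs, hu⟩ => by
    by_cases ht : x ∈ t
    exacts [Or.inr ⟨ht, hu⟩, Or.inl ⟨hs, ht⟩]

theorem AlmostSubset.infinite_inter (hst : s ⊆* t) (hs : s.Infinite) : (s ∩ t).Infinite := by
  rw [← sdiff_sdiff_right_self]
  exact hs.sdiff hst

theorem AlmostSubset.mem_ultrafilter {𝒰 : Ultrafilter α} (h𝒰 : (𝒰 : Filter α) ≤ cofinite)
    (hs : s ∈ 𝒰) (hst : s ⊆* t) : t ∈ 𝒰 :=
  mem_of_superset (inter_mem hs (h𝒰 hst.compl_mem_cofinite)) fun x ⟨hxs, hx⟩ => by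
    by_contra hxt
    exact hx ⟨hxs, hxt⟩

end AlmostSubset

theorem Ultrafilter.isOpen_singleton_pure {α : Type*} (x : α) :
    IsOpen {(pure x : Ultrafilter α)} := by
  convert ultrafilter_isOpen_basic {x}
  ext 𝒰
  rw [mem_singleton_iff, ← Ultrafilter.coe_inj, Ultrafilter.coe_pure, 𝒰.neBot.eq_pure_iff]
  rfl

theorem Set.Infinite.exists_ultrafilter_le_cofinite {α : Type*} {s : Set α} (hs : s.Infinite) :
    ∃ 𝒰 : Ultrafilter α, (𝒰 : Filter α) ≤ cofinite ∧ s ∈ 𝒰 := by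
  have := hs.cofinite_inf_principal_neBot
  obtain ⟨𝒰, h𝒰⟩ := Ultrafilter.exists_le (cofinite ⊓ 𝓟 s)
  exact ⟨𝒰, h𝒰.trans inf_le_left, h𝒰 (mem_inf_of_right (mem_principal_self s))⟩

theorem Ultrafilter.isClosed_setOf_forall_mem {α : Type*} (s : ℕ → Set α) :
    IsClosed {𝒰 : Ultrafilter α | ∀ n, s n ∈ 𝒰} := by
  rw [ofPred_forall]
  exact isClosed_iInter fun n => ultrafilter_isClosed_basic _

theorem Ultrafilter.isGδ_setOf_forall_mem {α : Type*} (s : ℕ → Set α) :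
    IsGδ {𝒰 : Ultrafilter α | ∀ n, s n ∈ 𝒰} := by
  rw [ofPred_forall]
  exact .iInter_of_isOpen fun n => ultrafilter_isOpen_basic _

theorem exists_strictMono_forall_mem_of_infinite (s : ℕ → Set ℕ) :
    ∃ φ : ℕ → ℕ, StrictMono φ ∧ ∀ n, (s n).Infinite → φ n ∈ s n := by
  refine extraction_forall_of_frequently (P := fun n k => (s n).Infinite → k ∈ s n) fun n => ?_
  by_cases hs : (s n).Infinite
  · exact (Nat.frequently_atTop_iff_infinite.2 hs).mono fun k hk _ => hk
  · exact Frequently.of_forall fun k h => absurd h hs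

theorem exists_infinite_almostSubset_forall (s : ℕ → Set ℕ) (hs : ∀ n, (s n).Infinite)
    (hanti : ∀ n, s (n + 1) ⊆* s n) : ∃ P : Set ℕ, P.Infinite ∧ ∀ n, P ⊆* s n := by
  have hle : ∀ m n, m ≤ n → s n ⊆* s m := fun m n hmn => by
    induction n, hmn using Nat.le_induction with
    | base => exact AlmostSubset.of_subset subset_rfl
    | succ n _ ih => exact (hanti n).trans ih
  have hI : ∀ n, (⋂ m ∈ Iic n, s m).Infinite := fun n => by
    refine ((hs n).sdiff ((finite_Iic n).biUnion fun m hm => hle m n hm)).mono ?_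
    intro x ⟨hxn, hx⟩
    simp only [mem_iUnion, Set.mem_sdiff, not_exists, not_and, not_not] at hx
    exact mem_iInter₂.2 fun m hm => hx m hm hxn
  obtain ⟨φ, hφ, hφI⟩ := exists_strictMono_forall_mem_of_infinite fun n => ⋂ m ∈ Iic n, s m
  refine ⟨range φ, infinite_range_of_injective hφ.injective, fun n => ?_⟩
  refine ((finite_Iio n).image φ).subset ?_
  rintro _ ⟨⟨k, rfl⟩, hk⟩
  refine ⟨k, mem_Iio.2 (not_le.1 fun hnk => hk ?_), rfl⟩
  exact mem_iInter₂.1 (hφI k (hI k)) n hnk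

theorem Set.Infinite.exists_pairwise_disjoint_infinite {S : Set ℕ} (hS : S.Infinite) :
    ∃ p : ℕ → Set ℕ, (∀ j, (p j).Infinite ∧ p j ⊆ S) ∧
      Pairwise fun j j' => Disjoint (p j) (p j') := by
  let e := hS.natEmbedding
  refine ⟨fun j => range fun k => (e (Nat.pair j k) : ℕ), fun j => ⟨?_, ?_⟩, ?_⟩
  · exact infinite_range_of_injective fun k k' h =>
      (Nat.pair_eq_pair.1 (e.injective (Subtype.val_injective h))).2
  · rintro _ ⟨k, rfl⟩
    exact (e _).2
  · intro j j' hjj'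
    refine disjoint_left.2 ?_
    rintro _ ⟨k, rfl⟩ ⟨k', hk'⟩
    exact hjj' (Nat.pair_eq_pair.1 (e.injective (Subtype.val_injective hk'))).1.symm

theorem exists_almostDisjoint_refinement {Q : ℕ → Set ℕ} (hQ : ∀ k, (Q k).Infinite)
    (hQQ : Pairwise fun k k' => (Q k ∩ Q k').Finite) :
    ∃ (π : ℕ → ℕ) (p : ℕ → Set ℕ), (∀ k, {c | π c = k}.Infinite) ∧
      (∀ c, (p c).Infinite ∧ p c ⊆ Q (π c)) ∧ Pairwise fun c c' => (p c ∩ p c').Finite := by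
  choose s hs hss using fun k => (hQ k).exists_pairwise_disjoint_infinite
  refine ⟨fun c => c.unpair.1, fun c => s c.unpair.1 c.unpair.2, fun k => ?_, fun c => hs _ _,
    fun c c' hcc' => ?_⟩
  · refine infinite_of_injective_forall_mem (f := Nat.pair k) (fun j j' h => ?_) fun j => ?_
    · exact (Nat.pair_eq_pair.1 h).2
    · simp
  · by_cases h : c.unpair.1 = c'.unpair.1
    · have h2 : c.unpair.2 ≠ c'.unpair.2 := fun h2 =>
        hcc' (by rw [← Nat.pair_unpair c, ← Nat.pair_unpair c', h, h2])
      have hdisj := hss c.unpair.1 h2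
      show (s _ _ ∩ s _ _).Finite
      rw [h] at hdisj ⊢
      simp [hdisj.inter_eq]
    · exact (hQQ h).subset (inter_subset_inter (hs _ _).2 (hs _ _).2)

theorem exists_strictMono_cofinal (I : Type*) [LinearOrder I] [Countable I] [Nonempty I]
    [NoMaxOrder I] : ∃ f : ℕ → I, StrictMono f ∧ ∀ i, ∃ n, i < f n := by
  obtain ⟨u, hu⟩ := exists_seq_tendsto (atTop : Filter I)
  obtain ⟨φ, hφ, huφ⟩ := strictMono_subseq_of_tendsto_atTop hu
  exact ⟨u ∘ φ, huφ, fun i => ((hu.comp hφ.tendsto_atTop).eventually_gt_atTop i).exists⟩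

theorem exists_coherent_of_forall_extend {ι α : Type*} [Preorder ι] [WellFoundedLT ι]
    [Nonempty α] (P : α → Prop) (R : α → α → Prop)
    (extend : ∀ (i : ι) (F : Iio i → α), (∀ j, P (F j)) → (∀ j k, j < k → R (F j) (F k)) →
      ∃ x, P x ∧ ∀ j, R (F j) x) :
    ∃ F : ι → α, (∀ i, P (F i)) ∧ ∀ i j, i < j → R (F i) (F j) := by
  classical
  let F : ι → α := WellFoundedLT.fix fun i G =>
    if h : (∀ j : Iio i, P (G j j.2)) ∧ ∀ j k : Iio i, j < k → R (G j j.2) (G k k.2) then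
      (extend i _ h.1 h.2).choose
    else Classical.arbitrary α
  have hF (i : ι) : P (F i) ∧ ∀ j, j < i → R (F j) (F i) := by
    induction i using WellFoundedLT.induction with
    | _ i ih =>
      have h : (∀ j : Iio i, P (F j)) ∧ ∀ j k : Iio i, j < k → R (F j) (F k) :=
        ⟨fun j => (ih j j.2).1, fun j k hjk => (ih k k.2).2 j hjk⟩
      rw [show F i = _ from WellFoundedLT.fix_eq _ i, dif_pos h]
      obtain ⟨hP, hR⟩ := (extend i _ h.1 h.2).choose_spec
      exact ⟨hP, fun j hj => hR ⟨j, hj⟩⟩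
  exact ⟨F, fun i => (hF i).1, fun i j hij => (hF j).2 i hij⟩

structure TreeLevel where
  node : ℕ → Set ℕ
  label : ℕ → ℚ

namespace TreeLevel

instance : Nonempty TreeLevel := ⟨⟨fun _ => ∅, fun _ => 0⟩⟩

structure IsAlmostDisjoint (L : TreeLevel) : Prop where
  infinite : ∀ n, (L.node n).Infinite
  pairwise : Pairwise fun n m => (L.node n ∩ L.node m).Finite

structure Below (L L' : TreeLevel) : Prop where
  almostSubset_of_infinite : ∀ n m, (L'.node n ∩ L.node m).Infinite →
    L'.node n ⊆* L.node m ∧ L.label m < L'.label n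
  exists_almostSubset : ∀ n, ∃ m, L'.node n ⊆* L.node m
  infinite_successors : ∀ m r, L.label m < r →
    {n | L'.node n ⊆* L.node m ∧ L.label m < L'.label n ∧ L'.label n < r}.Infinite

theorem Below.trans {L₁ L₂ L₃ : TreeLevel} (h₁₂ : L₁.Below L₂) (h₂₃ : L₂.Below L₃)
    (h₃ : ∀ n, (L₃.node n).Infinite) : L₁.Below L₃ where
  almostSubset_of_infinite n m hnm := by
    obtain ⟨k, hk⟩ := h₂₃.exists_almostSubset n
    obtain ⟨hnk, hlt⟩ := h₂₃.almostSubset_of_infinite n k (hk.infinite_inter (h₃ n))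
    have hkm : (L₂.node k ∩ L₁.node m).Infinite := fun hfin => hnm (hk.finite_inter hfin)
    obtain ⟨hkm', hlt'⟩ := h₁₂.almostSubset_of_infinite k m hkm
    exact ⟨hnk.trans hkm', hlt'.trans hlt⟩
  exists_almostSubset n := by
    obtain ⟨k, hk⟩ := h₂₃.exists_almostSubset n
    obtain ⟨m, hm⟩ := h₁₂.exists_almostSubset k
    exact ⟨m, hk.trans hm⟩
  infinite_successors m r hr := by
    obtain ⟨k, hkm, hmk, hkr⟩ := (h₁₂.infinite_successors m r hr).nonempty
    refine (h₂₃.infinite_successors k r hkr).mono fun n hn => ?_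
    exact ⟨hn.1.trans hkm, hmk.trans hn.2.1, hn.2.2⟩

theorem exists_isAlmostDisjoint : ∃ L : TreeLevel, L.IsAlmostDisjoint := by
  obtain ⟨p, hp, hpp⟩ := infinite_univ.exists_pairwise_disjoint_infinite
  exact ⟨⟨p, fun _ => 0⟩, fun n => (hp n).1, fun n m hnm => by simp [(hpp hnm).inter_eq]⟩

theorem exists_above {L : TreeLevel} (hL : L.IsAlmostDisjoint) :
    ∃ L' : TreeLevel, L'.IsAlmostDisjoint ∧ L.Below L' := by
  obtain ⟨π, p, hπ, hp, hpp⟩ := exists_almostDisjoint_refinement hL.infinite hL.pairwise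
  -- the labels of the children of `m` decrease to the label of `m`
  refine ⟨⟨p, fun c => L.label (π c) + 1 / (c + 1)⟩, ⟨fun c => (hp c).1, hpp⟩,
    fun c m hcm => ?_, fun c => ⟨π c, .of_subset (hp c).2⟩, fun m r hr => ?_⟩
  · have hm : π c = m := by
      by_contra hne
      exact hcm ((hL.pairwise hne).subset (inter_subset_inter_left _ (hp c).2))
    subst hm
    exact ⟨.of_subset (hp c).2, by simp only [lt_add_iff_pos_right]; positivity⟩
  · obtain ⟨N, hN⟩ := exists_nat_one_div_lt (sub_pos.2 hr)
    refine ((hπ m).sdiff (finite_Iic N)).mono fun c hc => ?_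
    simp only [Set.mem_sdiff, mem_ofPred_eq, mem_Iic, not_le] at hc ⊢
    obtain ⟨rfl, hcN⟩ := hc
    refine ⟨.of_subset (hp c).2, by simp only [lt_add_iff_pos_right]; positivity, ?_⟩
    have : (1 : ℚ) / (c + 1) < 1 / (N + 1) := by gcongr
    linarith

theorem exists_chains (g : ℕ → TreeLevel) (hg : ∀ b, (g b).Below (g (b + 1))) (a m : ℕ → ℕ)
    (t : ℕ → ℚ) (ht : ∀ k, (g (a k)).label (m k) < t k) :
    ∃ c : ℕ → ℕ → ℕ, (∀ k, c (a k) k = m k) ∧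
      (∀ k b, a k ≤ b → (g (b + 1)).node (c (b + 1) k) ⊆* (g b).node (c b k)) ∧
      (∀ k b, a k ≤ b → (g b).label (c b k) < t k) ∧
      ∀ b k k', a k < b → a k' < b → c b k = c b k' → k = k' := by
  choose sel hsel_mono hsel using exists_strictMono_forall_mem_of_infinite
  let cand (k b x : ℕ) : Set ℕ := {y | (g (b + 1)).node y ⊆* (g b).node x ∧
    (g b).label x < (g (b + 1)).label y ∧ (g (b + 1)).label y < t k}
  -- all chains are extended simultaneously, through distinct nodes
  let c : ℕ → ℕ → ℕ := fun b => Nat.rec m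
    (fun b cb k => if b < a k then m k else sel (fun k => cand k b (cb k)) k) b
  have c_succ (b k : ℕ) : c (b + 1) k =
      if b < a k then m k else sel (fun k => cand k b (c b k)) k := rfl
  have c_start (k : ℕ) : ∀ b ≤ a k, c b k = m k
    | 0, _ => rfl
    | b + 1, hb => by rw [c_succ, if_pos (by omega)]
  have c_mem (b k : ℕ) (hb : a k ≤ b) (hlt : (g b).label (c b k) < t k) :
      c (b + 1) k ∈ cand k b (c b k) := by
    rw [c_succ, if_neg (not_lt.2 hb)]
    exact hsel _ k ((hg b).infinite_successors _ _ hlt)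
  have c_label (k : ℕ) : ∀ b, a k ≤ b → (g b).label (c b k) < t k := by
    intro b hb
    induction b, hb using Nat.le_induction with
    | base => rw [c_start k _ le_rfl]; exact ht k
    | succ b hb ih => exact (c_mem b k hb ih).2.2
  refine ⟨c, fun k => c_start k _ le_rfl, fun k b hb => (c_mem b k hb (c_label k b hb)).1,
    c_label, fun b k k' hk hk' hkk' => ?_⟩
  obtain ⟨b, rfl⟩ := Nat.exists_eq_add_one_of_ne_zero (by omega : b ≠ 0)
  rw [c_succ, c_succ, if_neg (by omega), if_neg (by omega)] at hkk'
  exact (hsel_mono _).injective hkk'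

theorem exists_above_of_seq (g : ℕ → TreeLevel) (hg : ∀ b, (g b).IsAlmostDisjoint)
    (hgg : ∀ a b, a < b → (g a).Below (g b)) :
    ∃ L : TreeLevel, L.IsAlmostDisjoint ∧ ∀ a, (g a).Below L := by
  -- a task is a node `m` of a level `a` together with a bound `r` above its label
  let Task := {x : ℕ × ℕ × ℚ // (g x.1).label x.2.1 < x.2.2}
  have : Nonempty Task := ⟨⟨(0, 0, (g 0).label 0 + 1), lt_add_one _⟩⟩
  obtain ⟨τ, hτ⟩ := exists_surjective_nat Task
  let a k := (τ k).1.1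
  let m k := (τ k).1.2.1
  have hbounds (k : ℕ) : ∃ t s : ℚ, (g (a k)).label (m k) < t ∧ t < s ∧ s < (τ k).1.2.2 := by
    obtain ⟨t, hlt, htr⟩ := exists_between (τ k).2
    obtain ⟨s, hts, hsr⟩ := exists_between htr
    exact ⟨t, s, hlt, hts, hsr⟩
  choose t s hlt hts hsr using hbounds
  obtain ⟨c, hc_start, hc_sub, hc_label, hc_inj⟩ :=
    exists_chains g (fun b => hgg b (b + 1) b.lt_succ_self) a m t hlt
  choose P hP hPsub using fun k => exists_infinite_almostSubset_forall
    (fun j => (g (a k + j)).node (c (a k + j) k)) (fun j => (hg _).infinite _)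
    (fun j => hc_sub k (a k + j) (Nat.le_add_right _ _))
  have hP_sub (k b : ℕ) (hb : a k ≤ b) : P k ⊆* (g b).node (c b k) := by
    obtain ⟨j, rfl⟩ := Nat.exists_eq_add_of_le hb
    exact hPsub k j
  have hPP : Pairwise fun k k' => (P k ∩ P k').Finite := fun k k' hkk' => by
    let b := max (a k) (a k') + 1
    have hne : c b k ≠ c b k' := fun h => hkk' (hc_inj b k k' (by omega) (by omega) h)
    refine (hP_sub k b (by omega)).finite_inter ?_
    rw [inter_comm]
    exact (hP_sub k' b (by omega)).finite_inter (inter_comm _ _ ▸ (hg b).pairwise hne)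
  obtain ⟨π, p, hπ, hp, hpp⟩ := exists_almostDisjoint_refinement hP hPP
  have hchain (a₀ n : ℕ) : let b := a (π n) + a₀ + 1
      a₀ < b ∧ p n ⊆* (g b).node (c b (π n)) ∧ (g b).label (c b (π n)) < s (π n) :=
    ⟨by omega, (AlmostSubset.of_subset (hp n).2).trans (hP_sub _ _ (by omega)),
      (hc_label _ _ (by omega)).trans (hts _)⟩
  refine ⟨⟨p, fun n => s (π n)⟩, ⟨fun n => (hp n).1, hpp⟩, fun a₀ => ⟨fun n k hnk => ?_,
    fun n => ?_, fun k r hr => ?_⟩⟩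
  · obtain ⟨hb, hsub, hlab⟩ := hchain a₀ n
    obtain ⟨hsub', hlab'⟩ := (hgg a₀ _ hb).almostSubset_of_infinite _ k
      fun hfin => hnk (hsub.finite_inter hfin)
    exact ⟨hsub.trans hsub', hlab'.trans hlab⟩
  · obtain ⟨hb, hsub, -⟩ := hchain a₀ n
    obtain ⟨k, hk⟩ := (hgg a₀ _ hb).exists_almostSubset (c _ (π n))
    exact ⟨k, hsub.trans hk⟩
  · obtain ⟨j, hj⟩ := hτ ⟨(a₀, k, r), hr⟩
    have haj : a j = a₀ := by simp [a, hj]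
    have hmj : m j = k := by simp [m, hj]
    have hrj : (τ j).1.2.2 = r := by simp [hj]
    refine (hπ j).mono fun n hn => ?_
    simp only [mem_ofPred_eq] at hn ⊢
    subst hn
    have hsub := hP_sub (π n) _ le_rfl
    rw [hc_start, haj, hmj] at hsub
    refine ⟨(AlmostSubset.of_subset (hp n).2).trans hsub, ?_, hrj ▸ hsr _⟩
    have := (hlt (π n)).trans (hts _)
    rwa [haj, hmj] at this

theorem exists_above_of_countable {I : Type*} [LinearOrder I] [Countable I] (F : I → TreeLevel)
    (hF : ∀ i, (F i).IsAlmostDisjoint) (hFF : ∀ i j, i < j → (F i).Below (F j)) :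
    ∃ L : TreeLevel, L.IsAlmostDisjoint ∧ ∀ i, (F i).Below L := by
  rcases isEmpty_or_nonempty I with _ | _
  · obtain ⟨L, hL⟩ := exists_isAlmostDisjoint
    exact ⟨L, hL, isEmptyElim⟩
  by_cases hmax : ∃ i : I, IsMax i
  · obtain ⟨i, hi⟩ := hmax
    obtain ⟨L, hL, hiL⟩ := exists_above (hF i)
    refine ⟨L, hL, fun j => ?_⟩
    have hle : j ≤ i := (le_total j i).elim id fun h => hi h
    rcases hle.lt_or_eq with hji | rfl
    exacts [(hFF j i hji).trans hiL hL.infinite, hiL]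
  · have : NoMaxOrder I := ⟨fun i => not_isMax_iff.1 fun h => hmax ⟨i, h⟩⟩
    obtain ⟨f, hf, hf_cofinal⟩ := exists_strictMono_cofinal I
    obtain ⟨L, hL, hfL⟩ := exists_above_of_seq (F ∘ f) (fun _ => hF _) fun a b h => hFF _ _ (hf h)
    refine ⟨L, hL, fun i => ?_⟩
    obtain ⟨a, ha⟩ := hf_cofinal i
    exact (hFF _ _ ha).trans (hfL a) hL.infinite

theorem countable_setOf_exists_node_mem {ι : Type*} [LinearOrder ι] (T : ι → TreeLevel)
    (hT : ∀ β γ, β < γ → (T β).Below (T γ)) {𝒰 : Ultrafilter ℕ}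
    (h𝒰 : (𝒰 : Filter ℕ) ≤ cofinite) : {γ | ∃ n, (T γ).node n ∈ 𝒰}.Countable := by
  choose n hn using fun γ : {γ | ∃ n, (T γ).node n ∈ 𝒰} => γ.2
  -- two nodes in `𝒰` meet in an infinite set, so their labels increase with the level
  have hmono : StrictMono fun γ : {γ | ∃ n, (T γ).node n ∈ 𝒰} => (T γ).label (n γ) :=
    fun β γ hβγ => ((hT _ _ hβγ).almostSubset_of_infinite _ _ fun hfin =>
      Ultrafilter.compl_notMem_iff.2 (inter_mem (hn γ) (hn β)) (h𝒰 hfin.compl_mem_cofinite)).2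
  exact countable_coe_iff.1 hmono.injective.countable

theorem exists_ultrafilter_forall_lt_exists_node_mem {ι : Type*} [LT ι] {T : ι → TreeLevel}
    (hT : ∀ β γ, β < γ → (T β).Below (T γ)) {δ : ι} (hδ : (T δ).IsAlmostDisjoint) :
    ∃ 𝒰 : Ultrafilter ℕ, (𝒰 : Filter ℕ) ≤ cofinite ∧ ∀ γ < δ, ∃ n, (T γ).node n ∈ 𝒰 := by
  obtain ⟨𝒰, h𝒰, hδ𝒰⟩ := (hδ.infinite 0).exists_ultrafilter_le_cofinite
  refine ⟨𝒰, h𝒰, fun γ hγ => ?_⟩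
  obtain ⟨m, hm⟩ := (hT γ δ hγ).exists_almostSubset 0
  exact ⟨m, hm.mem_ultrafilter h𝒰 hδ𝒰⟩

end TreeLevel

theorem Omega1Index.countable_Iio_s19 (γ : Omega1Index) : (Iio γ).Countable := by
  have : (Iio γ.1).Countable := by
    rw [← Cardinal.le_aleph0_iff_set_countable, Cardinal.mk_Iio_ordinal, Cardinal.lift_le_aleph0,
      ← Cardinal.lt_aleph_one_iff, ← Cardinal.lt_ord, Cardinal.ord_aleph]
    exact γ.2
  exact this.preimage Subtype.val_injective

theorem Omega1Index.exists_gt_of_countable_s19 {S : Set Omega1Index} (hS : S.Countable) :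
    ∃ δ : Omega1Index, ∀ γ ∈ S, γ < δ := by
  have := hS.to_subtype
  have hsup : ⨆ γ : S, γ.1.1 < Ordinal.omega 1 := Ordinal.iSup_lt_omega_one fun γ => γ.1.2
  refine ⟨⟨Order.succ (⨆ γ : S, γ.1.1), (Cardinal.isSuccLimit_omega 1).succ_lt hsup⟩,
    fun γ hγ => ?_⟩
  exact (Ordinal.le_iSup (fun γ : S => γ.1.1) ⟨γ, hγ⟩).trans_lt (Order.lt_succ _)

theorem Omega1Index.exists_surjective_onto_nat : ∃ e : Omega1Index → ℕ, Function.Surjective e :=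
  ⟨_, Function.invFun_surjective (f := fun n : ℕ =>
    (⟨n, (Ordinal.natCast_lt_omega0 n).trans Ordinal.omega0_lt_omega_one⟩ : Omega1Index))
    fun m n h => by simpa using h⟩

theorem exists_omega1_tree : ∃ T : Omega1Index → TreeLevel,
    (∀ γ, (T γ).IsAlmostDisjoint) ∧ ∀ β γ, β < γ → (T β).Below (T γ) :=
  exists_coherent_of_forall_extend _ _ fun γ F hF hFF =>
    have := (Omega1Index.countable_Iio_s19 γ).to_subtype
    TreeLevel.exists_above_of_countable F hF hFF

theorem TreeLevel.exists_forall_node_notMem {T : Omega1Index → TreeLevel}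
    (hT : ∀ β γ, β < γ → (T β).Below (T γ)) {𝒰 : Ultrafilter ℕ}
    (h𝒰 : (𝒰 : Filter ℕ) ≤ cofinite) : ∃ δ, ∀ n, (T δ).node n ∉ 𝒰 := by
  obtain ⟨δ, hδ⟩ := Omega1Index.exists_gt_of_countable_s19 (countable_setOf_exists_node_mem T hT h𝒰)
  exact ⟨δ, fun n hn => (hδ δ ⟨n, hn⟩).false⟩

/-- There is a separable compact Hausdorff space with a cover by `ℵ₁` many closed `Gδ`
sets that has no countable subcover. -/
theorem exists_separable_pseudoAronszajn :
    ∃ (X : Type) (_ : TopologicalSpace X), CompactSpace X ∧ T2Space X ∧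
      (∃ D : Set X, D.Countable ∧ Dense D) ∧
      ∃ Z : Omega1Index → Set X,
        (∀ α, IsClosed (Z α)) ∧ (∀ α, IsGδ (Z α)) ∧ (⋃ α, Z α) = Set.univ ∧
        ¬ ∃ C : Set Omega1Index, C.Countable ∧ (⋃ α ∈ C, Z α) = Set.univ := by
  obtain ⟨T, hT₀, hT⟩ := exists_omega1_tree
  obtain ⟨e, he⟩ := Omega1Index.exists_surjective_onto_nat
  let Z γ : Set (Ultrafilter ℕ) := {𝒰 | ∀ n, ((T γ).node n)ᶜ ∈ 𝒰} ∪ {pure (e γ)}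
  refine ⟨Ultrafilter ℕ, inferInstance, inferInstance, inferInstance,
    ⟨range pure, countable_range _, denseRange_pure⟩, Z,
    fun γ => (Ultrafilter.isClosed_setOf_forall_mem _).union isClosed_singleton,
    fun γ => (Ultrafilter.isGδ_setOf_forall_mem _).union (Ultrafilter.isOpen_singleton_pure _).isGδ,
    eq_univ_of_forall fun 𝒰 => ?_, ?_⟩
  · rcases 𝒰.le_cofinite_or_eq_pure with h𝒰 | ⟨x, rfl⟩
    · obtain ⟨δ, hδ⟩ := TreeLevel.exists_forall_node_notMem hT h𝒰
      exact mem_iUnion.2 ⟨δ, .inl fun n => Ultrafilter.compl_mem_iff_notMem.2 (hδ n)⟩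
    · obtain ⟨γ, rfl⟩ := he x
      exact mem_iUnion.2 ⟨γ, .inr rfl⟩
  · rintro ⟨C, hC, hCZ⟩
    obtain ⟨δ, hδ⟩ := Omega1Index.exists_gt_of_countable_s19 hC
    obtain ⟨𝒰, h𝒰, h𝒰δ⟩ := TreeLevel.exists_ultrafilter_forall_lt_exists_node_mem hT (hT₀ δ)
    obtain ⟨γ, hγC, h𝒰γ | h𝒰γ⟩ := mem_iUnion₂.1 (hCZ ▸ mem_univ 𝒰)
    · obtain ⟨n, hn⟩ := h𝒰δ γ (hδ γ hγC)
      exact Ultrafilter.compl_notMem_iff.2 hn (h𝒰γ n)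
    · rw [mem_singleton_iff.1 h𝒰γ] at h𝒰
      exact Ultrafilter.mem_pure.1 (h𝒰 (finite_singleton (e γ)).compl_mem_cofinite) rfl
end
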